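/- arXiv:1211.0175 — 10 statements merged into one kernel-verified Lean document; each statement's English description precedes it below -/
import Mathlib

section
/- If RGC^d(r) denotes the r-th element of the base-b reflected Gray code and RGC^d_i(pred r) ≠ RGC^d_i(r) where pred r = r - 1, then i is the smallest index at which the base-b representations of r-1 and r differ. -/
/-- Auxiliary digit-scanning transformation: process the digits from most to least
significant, keeping track in `flip` of whether the remaining digits should currently
be complemented (`x ↦ b - 1 - x`); whenever the (possibly complemented) current digit
is odd, all following digits get complemented. -/
def rgcScanAux (b : ℕ) (flip : Bool) : List ℕ → List ℕ
  | [] => []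
  | x :: xs =>
    let y := if flip then b - 1 - x else x
    y :: rgcScanAux b (if y % 2 = 1 then !flip else flip) xs

/-- `rgc b w` is the base-`b` reflected Gray code word of the number with digit string `w`
(most significant digit first): it is obtained from `w` by scanning the digits from most
to least significant and, whenever an odd digit is encountered, complementing
(`x ↦ b - 1 - x`) every subsequent digit. -/
def rgc (b : ℕ) (w : List ℕ) : List ℕ := rgcScanAux b false w

/-- The `d`-digit base-`b` representation of `n` (most significant digit first). -/
def digitsBE (b : ℕ) : ℕ → ℕ → List ℕ
  | 0, _ => []
  | d + 1, n => digitsBE b d (n / b) ++ [n % b]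

def endFlip (b : ℕ) : Bool → List ℕ → Bool
  | f, [] => f
  | f, x :: xs => endFlip b (if (if f then b - 1 - x else x) % 2 = 1 then !f else f) xs

lemma scan_append (b : ℕ) (v : List ℕ) : ∀ (u : List ℕ) (f : Bool),
    rgcScanAux b f (u ++ v) = rgcScanAux b f u ++ rgcScanAux b (endFlip b f u) v := by
  intro u
  induction u with
  | nil => intro f; simp [rgcScanAux, endFlip]
  | cons x xs ih => intro f; simp [rgcScanAux, endFlip, ih]

lemma scan_length (b : ℕ) : ∀ (l : List ℕ) (f : Bool), (rgcScanAux b f l).length = l.length := by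
  intro l
  induction l with
  | nil => intro f; simp [rgcScanAux]
  | cons x xs ih => intro f; simp [rgcScanAux, ih]

lemma digitsBE_length (b : ℕ) : ∀ d n, (digitsBE b d n).length = d := by
  intro d
  induction d with
  | zero => intro n; simp [digitsBE]
  | succ d ih => intro n; simp [digitsBE, ih]

lemma tail_eq (b : ℕ) : ∀ (t : ℕ) (g : Bool),
    rgcScanAux b g (List.replicate t (b - 1)) = rgcScanAux b (!g) (List.replicate t 0) := by
  intro t
  induction t with
  | zero => intro g; simp [rgcScanAux]
  | succ t ih =>
    intro g
    cases g with
    | true => simp [rgcScanAux, List.replicate_succ, ih]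
    | false =>
      simp only [List.replicate_succ, rgcScanAux]
      rcases Nat.even_or_odd (b - 1) with h | h
      · have h1 : (b - 1) % 2 = 0 := Nat.even_iff.mp h
        simp [rgcScanAux, h1, ih]
      · have h1 : (b - 1) % 2 = 1 := Nat.odd_iff.mp h
        simp [rgcScanAux, h1, ih]

lemma mid (b a t : ℕ) (ha1 : 1 ≤ a) (ha2 : a < b) (g : Bool) :
    ∃ y1 y2 f, y1 ≠ y2 ∧
      rgcScanAux b g ((a - 1) :: List.replicate t (b - 1)) =
        y1 :: rgcScanAux b f (List.replicate t 0) ∧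
      rgcScanAux b g (a :: List.replicate t 0) =
        y2 :: rgcScanAux b f (List.replicate t 0) := by
  cases g with
  | false =>
    rcases Nat.mod_two_eq_zero_or_one a with h | h
    · -- a even, a - 1 odd
      have h' : (a - 1) % 2 = 1 := by omega
      refine ⟨a - 1, a, false, by omega, ?_, ?_⟩
      · simp [rgcScanAux, h', h]
        simpa using tail_eq b t true
      · simp [rgcScanAux, h]
    · -- a odd, a - 1 even
      have h' : (a - 1) % 2 = 0 := by omega
      refine ⟨a - 1, a, true, by omega, ?_, ?_⟩
      · simp [rgcScanAux, h', h]
        simpa using tail_eq b t false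
      · simp [rgcScanAux, h]
  | true =>
    have hy : b - 1 - (a - 1) = (b - 1 - a) + 1 := by omega
    rcases Nat.mod_two_eq_zero_or_one (b - 1 - a) with h | h
    · -- y2 even, y1 odd
      have h' : (b - 1 - (a - 1)) % 2 = 1 := by omega
      refine ⟨b - 1 - (a - 1), b - 1 - a, true, by omega, ?_, ?_⟩
      · simp [rgcScanAux, h', h]
        simpa using tail_eq b t false
      · simp [rgcScanAux, h]
    · -- y2 odd, y1 even
      have h' : (b - 1 - (a - 1)) % 2 = 0 := by omega
      refine ⟨b - 1 - (a - 1), b - 1 - a, false, by omega, ?_, ?_⟩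
      · simp [rgcScanAux, h', h]
        simpa using tail_eq b t true
      · simp [rgcScanAux, h]

lemma digits_pred (b : ℕ) (hb : 2 ≤ b) : ∀ d r, 1 ≤ r → r < b ^ d →
    ∃ P a t, d = P.length + 1 + t ∧ 1 ≤ a ∧ a < b ∧
      digitsBE b d r = P ++ a :: List.replicate t 0 ∧
      digitsBE b d (r - 1) = P ++ (a - 1) :: List.replicate t (b - 1) := by
  intro d
  induction d with
  | zero => intro r h1 h2; simp at h2; omega
  | succ d ih =>
    intro r h1 h2
    have hb0 : 0 < b := by omega
    have hmd : r % b + b * (r / b) = r := Nat.mod_add_div r b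
    have hmlt : r % b < b := Nat.mod_lt r hb0
    by_cases hm : r % b = 0
    · -- r divisible by b
      have hq1 : 1 ≤ r / b := by
        rcases Nat.eq_zero_or_pos (r / b) with h | h
        · rw [h, Nat.mul_zero] at hmd; omega
        · exact h
      have hqlt : r / b < b ^ d := by
        refine (Nat.div_lt_iff_lt_mul hb0).mpr ?_
        calc r < b ^ (d + 1) := h2
          _ = b ^ d * b := pow_succ b d
      obtain ⟨P, a, t, hdt, ha1, ha2, heq1, heq2⟩ := ih (r / b) hq1 hqlt
      obtain ⟨q, hq⟩ : ∃ q, r / b = q + 1 := ⟨r / b - 1, by omega⟩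
      rw [hq] at hmd
      have hbq : b * (q + 1) = b * q + b := by ring
      have hr1 : r - 1 = (b - 1) + b * q := by omega
      have hdiv : (r - 1) / b = q := by
        rw [hr1, Nat.add_mul_div_left _ _ hb0, Nat.div_eq_of_lt (by omega)]
        omega
      have hmod : (r - 1) % b = b - 1 := by
        rw [hr1, Nat.add_mul_mod_self_left, Nat.mod_eq_of_lt (by omega)]
      have hq' : r / b - 1 = q := by omega
      refine ⟨P, a, t + 1, by omega, ha1, ha2, ?_, ?_⟩
      · show digitsBE b d (r / b) ++ [r % b] = _
        rw [heq1, hm, List.replicate_succ']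
        simp
      · show digitsBE b d ((r - 1) / b) ++ [(r - 1) % b] = _
        rw [hdiv, hmod, ← hq', heq2, List.replicate_succ']
        simp
    · -- r % b ≥ 1
      obtain ⟨c, hc⟩ : ∃ c, r % b = c + 1 := ⟨r % b - 1, by omega⟩
      have hr1 : r - 1 = c + b * (r / b) := by omega
      have hdiv : (r - 1) / b = r / b := by
        rw [hr1, Nat.add_mul_div_left _ _ hb0, Nat.div_eq_of_lt (by omega)]
        omega
      have hmod : (r - 1) % b = c := by
        rw [hr1, Nat.add_mul_mod_self_left, Nat.mod_eq_of_lt (by omega)]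
      refine ⟨digitsBE b d (r / b), r % b, 0, by simp [digitsBE_length], by omega, hmlt, ?_, ?_⟩
      · show digitsBE b d (r / b) ++ [r % b] = _
        simp
      · show digitsBE b d ((r - 1) / b) ++ [(r - 1) % b] = _
        rw [hdiv, hmod]
        simp
        omega

/-- If digit `i` of the reflected-Gray-code words of `r - 1` and of `r` differ,
then `i` is the smallest index at which the base-`b` representations of `r - 1`
and `r` differ. -/
theorem rgc_changing_digit (b d r i : ℕ) (hb : 2 ≤ b) (hd : 1 ≤ d)
    (hr1 : 1 ≤ r) (hr : r < b ^ d) (hi : i < d)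
    (hne : (rgc b (digitsBE b d (r - 1))).getD i 0 ≠ (rgc b (digitsBE b d r)).getD i 0) :
    (digitsBE b d (r - 1)).getD i 0 ≠ (digitsBE b d r).getD i 0 ∧
      ∀ j < i, (digitsBE b d (r - 1)).getD j 0 = (digitsBE b d r).getD j 0 := by
  obtain ⟨P, a, t, hdt, ha1, ha2, heq1, heq2⟩ := digits_pred b hb d r hr1 hr
  obtain ⟨y1, y2, f, hy, hmid1, hmid2⟩ := mid b a t ha1 ha2 (endFlip b false P)
  have hgray1 : rgc b (digitsBE b d (r - 1)) =
      rgcScanAux b false P ++ y1 :: rgcScanAux b f (List.replicate t 0) := by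
    rw [heq2, rgc, scan_append, hmid1]
  have hgray0 : rgc b (digitsBE b d r) =
      rgcScanAux b false P ++ y2 :: rgcScanAux b f (List.replicate t 0) := by
    rw [heq1, rgc, scan_append, hmid2]
  set Q := rgcScanAux b false P with hQ
  set T := rgcScanAux b f (List.replicate t 0) with hT
  have hQlen : Q.length = P.length := scan_length b P false
  have hik : i = P.length := by
    rcases lt_trichotomy i P.length with h | h | h
    · exfalso
      apply hne
      rw [hgray1, hgray0, List.getD_append Q (y1 :: T) 0 i (by omega),
        List.getD_append Q (y2 :: T) 0 i (by omega)]
    · exact h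
    · exfalso
      apply hne
      rw [hgray1, hgray0, List.getD_append_right Q (y1 :: T) 0 i (by omega),
        List.getD_append_right Q (y2 :: T) 0 i (by omega)]
      obtain ⟨m, hm2⟩ : ∃ m, i - Q.length = m + 1 := ⟨i - Q.length - 1, by omega⟩
      rw [hm2]
      simp
  constructor
  · rw [heq2, heq1,
      List.getD_append_right P ((a - 1) :: List.replicate t (b - 1)) 0 i (by omega),
      List.getD_append_right P (a :: List.replicate t 0) 0 i (by omega)]
    have h0 : i - P.length = 0 := by omega
    rw [h0]
    simp
    omega
  · intro j hj
    rw [heq2, heq1,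
      List.getD_append P ((a - 1) :: List.replicate t (b - 1)) 0 j (by omega),
      List.getD_append P (a :: List.replicate t 0) 0 j (by omega)]
end

section
/- For the ternary reflected Gray code: if the i-th digit of r is even, then deleting digit i from RGC^d(r) yields RGC^{d-1} evaluated at r with digit i deleted; that is, take_i(RGC^d(r)) = RGC^{d-1}(take_i(r)). -/
lemma rgcScanAux_eraseIdx (f : Bool) (i : ℕ) (w : List ℕ)
    (hdig : ∀ x ∈ w, x < 3) (heven : w.getD i 0 % 2 = 0) :
    (rgcScanAux 3 f w).eraseIdx i = rgcScanAux 3 f (w.eraseIdx i) := by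
  induction w generalizing f i with
  | nil => simp [rgcScanAux]
  | cons x xs ih =>
    have hx : x < 3 := hdig x (by simp)
    cases i with
    | zero =>
      simp only [List.getD_cons_zero] at heven
      have hy : (if f then 3 - 1 - x else x) % 2 = 0 := by
        rcases f with _ | _ <;> simp <;> omega
      simp [rgcScanAux, hy]
    | succ i =>
      simp only [List.getD_cons_succ] at heven
      simp only [rgcScanAux, List.eraseIdx_cons_succ]
      rw [ih _ _ (fun y hy => hdig y (by simp [hy])) heven]

/-- For the ternary reflected Gray code: if the `i`-th digit of `r` is even, then
deleting digit `i` from `RGC^d(r)` yields the `(d-1)`-digit reflected Gray code word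
of `r` with digit `i` deleted. -/
theorem ternary_rgc_eraseIdx_even_digit (d i : ℕ) (hd : 2 ≤ d) (hi : i < d)
    (w : List ℕ) (hw : w.length = d) (hdig : ∀ x ∈ w, x < 3)
    (heven : w.getD i 0 % 2 = 0) :
    (rgc 3 w).eraseIdx i = rgc 3 (w.eraseIdx i) := by
  exact rgcScanAux_eraseIdx false i w hdig heven
end

section
/- For the ternary reflected Gray code and any even digit value k in {0,2} and any index i with 0 <= i < d: restricting the sequence RGC^d to those elements whose i-th digit equals k, and deleting the i-th digit from each, yields exactly the sequence RGC^{d-1} in order. -/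
/-- The base-`b` reflected Gray code as a sequence: the `r`-th element is the Gray code
word of the `d`-digit base-`b` representation of `r`, for `r = 0, ..., b^d - 1`. -/
def rgcSeq (b d : ℕ) : List (List ℕ) :=
  (List.range (b ^ d)).map (fun r => rgc b (digitsBE b d r))
/-! Complementing every digit (`x ↦ b - 1 - x`) of the `d`-digit numeral of `m` gives the
numeral of `b^d - 1 - m`, and a digit scanned with the flip on yields the same Gray digit as its
complement scanned with the flip off; so a flipped scan of `m` is the plain scan of
`b^d - 1 - m`. For `b = 3` this splits `RGC^(d+1)` into the blocks `0·RGC^d`,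
`1·reverse RGC^d` and `2·RGC^d`. Reduction at digit `0` with `k ∈ {0, 2}` keeps exactly one
of the unreversed blocks, and reduction at digit `i + 1` acts blockwise and commutes with
reversal, so induction on `i` finishes the proof. -/

lemma digitsBE_succ (b d n : ℕ) :
    digitsBE b (d + 1) n = n / b ^ d % b :: digitsBE b d (n % b ^ d) := by
  induction d generalizing n with
  | zero => simp [digitsBE]
  | succ d ih =>
    show digitsBE b (d + 1) (n / b) ++ [n % b] = _
    rw [ih (n / b)]
    show _ = _ :: (digitsBE b d (n % b ^ (d + 1) / b) ++ [n % b ^ (d + 1) % b])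
    rw [Nat.div_div_eq_div_mul, Nat.mod_mod_of_dvd n (dvd_pow_self b d.succ_ne_zero),
      pow_succ', Nat.mod_mul_right_div_self]
    rfl

lemma digitsBE_mul_pow_add (b d a m : ℕ) (ha : a < b) (hm : m < b ^ d) :
    digitsBE b (d + 1) (a * b ^ d + m) = a :: digitsBE b d m := by
  have hdiv : (a * b ^ d + m) / b ^ d = a := by
    rw [Nat.add_comm, Nat.add_mul_div_right _ _ (by omega), Nat.div_eq_of_lt hm, Nat.zero_add]
  rw [digitsBE_succ, hdiv, Nat.mod_eq_of_lt ha, Nat.mul_add_mod_of_lt hm]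

lemma rgcScanAux_cons (b : ℕ) (f : Bool) (x : ℕ) (xs : List ℕ) :
    rgcScanAux b f (x :: xs) = (if f then b - 1 - x else x) ::
      rgcScanAux b (if (if f then b - 1 - x else x) % 2 = 1 then !f else f) xs := rfl

theorem rgcScanAux_true_digitsBE (b d m : ℕ) (hm : m < b ^ d) :
    rgcScanAux b true (digitsBE b d m) = rgcScanAux b false (digitsBE b d (b ^ d - 1 - m)) := by
  induction d generalizing m with
  | zero => simp [digitsBE, rgcScanAux]
  | succ d ih =>
    have hP : 0 < b ^ d := Nat.pos_of_ne_zero fun h => by simp [pow_succ, h] at hm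
    obtain ⟨a, r, ha, hr, rfl⟩ : ∃ a r, a < b ∧ r < b ^ d ∧ m = a * b ^ d + r :=
      ⟨m / b ^ d, m % b ^ d, Nat.div_lt_of_lt_mul (by rwa [← pow_succ]), Nat.mod_lt m hP,
        by rw [Nat.mul_comm]; exact (Nat.div_add_mod m _).symm⟩
    have hcompl : b ^ (d + 1) - 1 - (a * b ^ d + r) = (b - 1 - a) * b ^ d + (b ^ d - 1 - r) := by
      have : (a + 1) * b ^ d ≤ b * b ^ d := Nat.mul_le_mul_right _ ha
      rw [pow_succ', Nat.sub_mul, Nat.sub_mul, one_mul]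
      rw [Nat.add_mul, one_mul] at this
      omega
    rw [hcompl, digitsBE_mul_pow_add b d a r ha hr,
      digitsBE_mul_pow_add b d _ _ (by omega) (by omega), rgcScanAux_cons, rgcScanAux_cons]
    by_cases hodd : (b - 1 - a) % 2 = 1
    · have h := ih (b ^ d - 1 - r) (by omega)
      rw [Nat.sub_sub_self (by omega : r ≤ b ^ d - 1)] at h
      simp [hodd, h]
    · simp [hodd, ih r hr]

lemma rgc_digitsBE_mul_pow_add (b d a m : ℕ) (ha : a < b) (hm : m < b ^ d) :
    rgc b (digitsBE b (d + 1) (a * b ^ d + m)) =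
      a :: rgcScanAux b (decide (a % 2 = 1)) (digitsBE b d m) := by
  rw [rgc, digitsBE_mul_pow_add b d a m ha hm, rgcScanAux_cons]
  simp

theorem rgcSeq_three_succ (d : ℕ) : rgcSeq 3 (d + 1) =
    (rgcSeq 3 d).map (0 :: ·) ++ (rgcSeq 3 d).reverse.map (1 :: ·)
      ++ (rgcSeq 3 d).map (2 :: ·) := by
  rw [rgcSeq, show (3 : ℕ) ^ (d + 1) = 3 ^ d + (3 ^ d + 3 ^ d) by ring, List.range_add,
    List.range_add, List.map_append, List.map_map, List.map_append, List.map_map,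
    List.append_assoc, rgcSeq, ← List.map_reverse, List.range_eq_range', List.reverse_range',
    ← List.range_eq_range']
  simp only [List.map_map]
  refine congrArg₂ _ ?_ (congrArg₂ _ ?_ ?_) <;>
    refine List.map_congr_left fun r hr => ?_ <;> rw [List.mem_range] at hr
  · simpa [rgc] using rgc_digitsBE_mul_pow_add 3 d 0 r (by norm_num) hr
  · simpa [rgcScanAux_true_digitsBE 3 d r hr, rgc] using
      rgc_digitsBE_mul_pow_add 3 d 1 r (by norm_num) hr
  · simpa [rgc, two_mul, Nat.add_assoc] using rgc_digitsBE_mul_pow_add 3 d 2 r (by norm_num) hr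

def reduction (i k : ℕ) (L : List (List ℕ)) : List (List ℕ) :=
  (L.filter (fun w => w.getD i 0 = k)).map (fun w => w.eraseIdx i)

section reduction

variable (i k : ℕ) (L M : List (List ℕ))

lemma reduction_append : reduction i k (L ++ M) = reduction i k L ++ reduction i k M := by
  simp [reduction]

lemma reduction_reverse : reduction i k L.reverse = (reduction i k L).reverse := by
  simp [reduction]

lemma reduction_zero_map_cons_self : reduction 0 k (L.map (k :: ·)) = L := by
  simp [reduction, List.filter_map, Function.comp_def]

lemma reduction_zero_map_cons_of_ne {a : ℕ} (h : a ≠ k) :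
    reduction 0 k (L.map (a :: ·)) = [] := by
  simp [reduction, List.filter_map, Function.comp_def, h]

lemma reduction_succ_map_cons (a : ℕ) :
    reduction (i + 1) k (L.map (a :: ·)) = (reduction i k L).map (a :: ·) := by
  simp [reduction, List.filter_map, Function.comp_def]

end reduction

theorem reduction_rgcSeq_three (i d k : ℕ) (hk : k = 0 ∨ k = 2) (hi : i ≤ d) :
    reduction i k (rgcSeq 3 (d + 1)) = rgcSeq 3 d := by
  induction i generalizing d with
  | zero =>
    rcases hk with rfl | rfl <;>
      simp [rgcSeq_three_succ, reduction_append, reduction_reverse,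
        reduction_zero_map_cons_self, reduction_zero_map_cons_of_ne]
  | succ i ih =>
    obtain ⟨d, rfl⟩ : ∃ d', d = d' + 1 := ⟨d - 1, by omega⟩
    rw [rgcSeq_three_succ, reduction_append, reduction_append, reduction_succ_map_cons,
      reduction_succ_map_cons, reduction_reverse, reduction_succ_map_cons, ih d (by omega),
      ← rgcSeq_three_succ]

theorem ternary_rgc_reduction_general (d i k : ℕ) (hi : i < d) (hk : k = 0 ∨ k = 2) :
    ((rgcSeq 3 d).filter (fun w => w.getD i 0 = k)).map (fun w => w.eraseIdx i)
      = rgcSeq 3 (d - 1) := by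
  obtain ⟨d, rfl⟩ : ∃ d', d = d' + 1 := ⟨d - 1, by omega⟩
  exact reduction_rgcSeq_three i d k hk (by omega)

/-- For the ternary reflected Gray code, any even digit value `k ∈ {0,2}` and any
index `i < d`: restricting the sequence `RGC^d` to those elements whose `i`-th digit
equals `k`, and deleting the `i`-th digit from each, yields exactly the sequence
`RGC^(d-1)` in order. -/
theorem ternary_rgc_reduction (d i k : ℕ) (hd : 2 ≤ d) (hi : i < d) (hk : k = 0 ∨ k = 2) :
    ((rgcSeq 3 d).filter (fun w => w.getD i 0 = k)).map (fun w => w.eraseIdx i)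
      = rgcSeq 3 (d - 1) :=
  ternary_rgc_reduction_general d i k hi hk
end

section
/- For the binary reflected Gray code: if r_i = r_{i-1} (with the convention r_{-1} = 0) or i = d-1, then deleting bit i from RGC^d(r) yields RGC^{d-1}(take_i(r)); whereas if i < d-1 and r_i ≠ r_{i-1}, then deleting bit i from RGC^d(r) yields RGC^{d-1}(take_i(r)) with bit i complemented. -/
/-!
Erasing bit `i` of a word `r` changes at most bit `i` of its Gray code: every other Gray bit
of the shorter word is still the XOR of the same two neighbours of `r`, while bit `i` becomes
`r_{i+1} ⊕ r_{i-1}` instead of `r_{i+1} ⊕ r_i`. It is therefore unchanged when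
`r_i = r_{i-1}` and complemented otherwise; when `i` is the last position there is no bit `i`
left to change.
-/

/-- The binary reflected Gray code word of a bit string `w` (most significant bit
first): bit `i` of the Gray code is the XOR of bits `i` and `i-1` of `w`, with the
convention that the bit at index `-1` is `0`. -/
def gray2 (w : List ℕ) : List ℕ :=
  (List.range w.length).map
    (fun i => (w.getD i 0 + if i = 0 then 0 else w.getD (i - 1) 0) % 2)

/-- `mirror i w` complements (`x ↦ 1 - x`) the bit of `w` at index `i`. -/
def mirror (i : ℕ) (w : List ℕ) : List ℕ := w.set i (1 - w.getD i 0)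

theorem List.getD_eraseIdx {α : Type*} (l : List α) (i j : ℕ) (d : α) :
    (l.eraseIdx i).getD j d = if j < i then l.getD j d else l.getD (j + 1) d := by
  simp only [List.getD_eq_getElem?_getD, List.getElem?_eraseIdx]
  split <;> rfl

theorem List.getD_of_forall_mem {α : Type*} {p : α → Prop} {l : List α} (h : ∀ x ∈ l, p x)
    {d : α} (hd : p d) (k : ℕ) : p (l.getD k d) := by
  rw [List.getD_eq_getElem?_getD]
  cases hk : l[k]? with
  | none => exact hd
  | some x => exact h x (List.mem_of_getElem? hk)

theorem length_gray2 (w : List ℕ) : (gray2 w).length = w.length := by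
  simp [gray2]

theorem getElem_gray2 (w : List ℕ) (j : ℕ) (h : j < (gray2 w).length) :
    (gray2 w)[j] = (w.getD j 0 + if j = 0 then 0 else w.getD (j - 1) 0) % 2 := by
  simp [gray2]

theorem eraseIdx_gray2 (w : List ℕ) (i : ℕ) :
    (gray2 w).eraseIdx i =
      (gray2 (w.eraseIdx i)).set i ((w.getD (i + 1) 0 + w.getD i 0) % 2) := by
  apply List.ext_getElem (by simp [length_gray2, List.length_eraseIdx])
  intro j h₁ h₂
  rw [List.getElem_eraseIdx, List.getElem_set]
  split_ifs <;> simp only [getElem_gray2, List.getD_eraseIdx] <;> grind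

theorem binary_rgc_eraseIdx_general (d i : ℕ) (w : List ℕ) (hw : w.length = d)
    (hbits : ∀ x ∈ w, x < 2) :
    ((w.getD i 0 = (if i = 0 then 0 else w.getD (i - 1) 0) ∨ i = d - 1) →
        (gray2 w).eraseIdx i = gray2 (w.eraseIdx i)) ∧
    (i < d - 1 → w.getD i 0 ≠ (if i = 0 then 0 else w.getD (i - 1) 0) →
        (gray2 w).eraseIdx i = mirror i (gray2 (w.eraseIdx i))) := by
  rw [eraseIdx_gray2]
  by_cases hlast : i + 1 < d
  swap
  · have hshort : (gray2 (w.eraseIdx i)).length ≤ i := by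
      simp only [length_gray2, List.length_eraseIdx]; split <;> omega
    exact ⟨fun _ => List.set_eq_of_length_le hshort, fun _ => by omega⟩
  have hi : i < (gray2 (w.eraseIdx i)).length := by
    simp only [length_gray2, List.length_eraseIdx]; split <;> omega
  have hgray_i : (gray2 (w.eraseIdx i))[i] =
      (w.getD (i + 1) 0 + if i = 0 then 0 else w.getD (i - 1) 0) % 2 := by
    simp only [getElem_gray2, List.getD_eraseIdx]
    grind
  refine ⟨fun h => ?_, fun _ hne => ?_⟩
  · obtain h | h := h
    · conv_rhs => rw [← List.set_getElem_self hi, hgray_i, ← h]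
    · omega
  · have hbit : ∀ k, w.getD k 0 < 2 := List.getD_of_forall_mem hbits (by norm_num)
    rw [mirror, List.getD_eq_getElem _ _ hi, hgray_i]
    grind [hbit (i + 1), hbit i, hbit (i - 1)]

/-- For the binary reflected Gray code on `d`-bit words: if `r_i = r_{i-1}`
(with the convention `r_{-1} = 0`) or `i = d-1`, then deleting bit `i` from `RGC^d(r)`
yields `RGC^{d-1}(take_i(r))`; whereas if `i < d-1` and `r_i ≠ r_{i-1}`, then deleting
bit `i` from `RGC^d(r)` yields `RGC^{d-1}(take_i(r))` with bit `i` complemented. -/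
theorem binary_rgc_eraseIdx (d i : ℕ) (hd : 2 ≤ d) (hi : i < d)
    (w : List ℕ) (hw : w.length = d) (hbits : ∀ x ∈ w, x < 2) :
    ((w.getD i 0 = (if i = 0 then 0 else w.getD (i - 1) 0) ∨ i = d - 1) →
        (gray2 w).eraseIdx i = gray2 (w.eraseIdx i)) ∧
    (i < d - 1 → w.getD i 0 ≠ (if i = 0 then 0 else w.getD (i - 1) 0) →
        (gray2 w).eraseIdx i = mirror i (gray2 (w.eraseIdx i))) :=
  binary_rgc_eraseIdx_general d i w hw hbits
end

section
/- A d-dimensional b-regular mono-curve has neutral orientation if and only if there exists a positive integer m such that every permutation in S_d can be written as a composition of exactly m permutations from the multiset {a(0), ..., a(b^d - 1)} of subregion permutations. -/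
/-- A curve whose subregions (indexed by `ι`) carry the permutations `a : ι → S_d` has
*neutral orientation* if, for a uniformly random sequence `R` of subregion indices of
length `m`, the distribution of the composition `a(R)` of the corresponding
permutations converges, as `m → ∞`, to the uniform distribution on `S_d`, which assigns
probability `1/d!` to each permutation. -/
def NeutralOrientation {d : ℕ} {ι : Type} [Fintype ι]
    (a : ι → Equiv.Perm (Fin d)) : Prop :=
  Filter.Tendsto
    (fun m : ℕ => fun σ : Equiv.Perm (Fin d) =>
      ((Finset.univ.filter
          (fun R : Fin m → ι => (List.ofFn (fun t => a (R t))).prod = σ)).card : ℝ)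
        / (Fintype.card ι : ℝ) ^ m)
    Filter.atTop (nhds (fun _ => (Nat.factorial d : ℝ)⁻¹))

/-!
Splitting a sequence of length `m + n` after its first `m` letters shows that the law `p_m` of
`a(R)` satisfies `p_(m+n) = p_m ⋆ p_n` (convolution on the group). If every permutation is a
product of exactly `k` letters, then `p_k ≥ ε > 0` everywhere, and convolution with `p_k`
contracts the `ℓ¹`-distance to the uniform law by the factor `1 - |G| ε` (a Doeblin argument).
That distance is non-increasing, so its limit `L` satisfies `L ≤ (1 - |G| ε) L`, whence `L = 0`.
Conversely, convergence to the uniform law, which is positive, makes every `p_m(σ)` positive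
for large `m`.
-/

open Finset Filter Topology

section Convolution

variable {G : Type*} [Group G] [Fintype G]

theorem sum_comp_inv_mul (h : G → ℝ) (σ : G) : ∑ τ, h (τ⁻¹ * σ) = ∑ τ, h τ :=
  Fintype.sum_equiv ((Equiv.inv G).trans (Equiv.mulRight σ)) _ _ fun _ => rfl

theorem sum_comp_mul_left (h : G → ℝ) (g : G) : ∑ σ, h (g * σ) = ∑ σ, h σ :=
  Fintype.sum_equiv (Equiv.mulLeft g) _ _ fun _ => rfl

theorem sum_abs_conv_le (f g : G → ℝ) (hg : 0 ≤ g) :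
    ∑ σ, |∑ τ, f τ * g (τ⁻¹ * σ)| ≤ (∑ τ, |f τ|) * ∑ σ, g σ :=
  calc ∑ σ, |∑ τ, f τ * g (τ⁻¹ * σ)|
      ≤ ∑ σ, ∑ τ, |f τ| * g (τ⁻¹ * σ) := by
        gcongr with σ
        refine (abs_sum_le_sum_abs _ _).trans_eq (sum_congr rfl fun τ _ => ?_)
        rw [abs_mul, abs_of_nonneg (hg _)]
    _ = (∑ τ, |f τ|) * ∑ σ, g σ := by
        rw [sum_comm, sum_mul]
        simp only [← mul_sum, sum_comp_mul_left]

variable [DecidableEq G]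

theorem card_filter_mul_eq_sum {X Y : Type*} [Fintype X] [Fintype Y] (f : X → G) (g : Y → G)
    (σ : G) :
    #{p : X × Y | f p.1 * g p.2 = σ} = ∑ τ, #{x | f x = τ} * #{y | g y = τ⁻¹ * σ} := by
  rw [card_eq_sum_card_fiberwise (f := fun p => f p.1) (t := univ) fun _ _ => mem_univ _]
  refine sum_congr rfl fun τ _ => ?_
  rw [← card_product, filter_filter]
  congr 1
  ext ⟨x, y⟩
  simp only [mem_filter, mem_univ, true_and, mem_product]
  constructor
  · rintro ⟨hσ, rfl⟩
    exact ⟨rfl, eq_inv_mul_of_mul_eq hσ⟩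
  · rintro ⟨rfl, hy⟩
    exact ⟨by rw [hy, mul_inv_cancel_left], rfl⟩

end Convolution

section WalkDistribution

variable {G ι : Type*} [Group G] [DecidableEq G] [Fintype ι] (a : ι → G)

noncomputable def walkDist (m : ℕ) (σ : G) : ℝ :=
  (#{R : Fin m → ι | (List.ofFn fun t => a (R t)).prod = σ} : ℝ) / (Fintype.card ι : ℝ) ^ m

theorem walkDist_nonneg (m : ℕ) (σ : G) : 0 ≤ walkDist a m σ := by
  unfold walkDist; positivity

theorem walkDist_pos_iff (m : ℕ) (σ : G) :
    0 < walkDist a m σ ↔ ∃ L : List ι, L.length = m ∧ (L.map a).prod = σ := by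
  simp only [List.exists_iff_exists_tuple, List.length_ofFn, List.map_ofFn, exists_and_left,
    exists_eq_left]
  constructor
  · intro h
    by_contra! hne
    have hempty : #{R : Fin m → ι | (List.ofFn fun t => a (R t)).prod = σ} = 0 :=
      card_eq_zero.2 (filter_eq_empty_iff.2 fun R _ => hne R)
    simp [walkDist, hempty] at h
  · rintro ⟨R, hR⟩
    have hcard := Fintype.card_pos (α := Fin m → ι) (h := ⟨R⟩)
    rw [Fintype.card_fun, Fintype.card_fin] at hcard
    exact div_pos (by exact_mod_cast card_pos.2 ⟨R, mem_filter.2 ⟨mem_univ _, hR⟩⟩)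
      (by exact_mod_cast hcard)

variable [Fintype G]

theorem walkDist_add (m n : ℕ) (σ : G) :
    walkDist a (m + n) σ = ∑ τ, walkDist a m τ * walkDist a n (τ⁻¹ * σ) := by
  have hcount : #{p : (Fin m → ι) × (Fin n → ι) |
        (List.ofFn fun t => a (p.1 t)).prod * (List.ofFn fun t => a (p.2 t)).prod = σ}
      = #{R : Fin (m + n) → ι | (List.ofFn fun t => a (R t)).prod = σ} :=
    card_equiv (Fin.appendEquiv m n) fun p => by simp [Fin.appendEquiv, List.ofFn_add]
  rw [walkDist, ← hcount,
    card_filter_mul_eq_sum (fun R : Fin m → ι => (List.ofFn fun t => a (R t)).prod)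
      (fun R : Fin n → ι => (List.ofFn fun t => a (R t)).prod)]
  push_cast
  rw [sum_div]
  refine sum_congr rfl fun τ _ => ?_
  rw [pow_add]
  exact (div_mul_div_comm _ _ _ _).symm

theorem sum_walkDist [Nonempty ι] (m : ℕ) : ∑ σ, walkDist a m σ = 1 := by
  have hcount := card_eq_sum_card_fiberwise (s := (univ : Finset (Fin m → ι))) (t := univ)
    (f := fun R => (List.ofFn fun t => a (R t)).prod) fun _ _ => mem_univ _
  rw [card_univ, Fintype.card_fun, Fintype.card_fin] at hcount
  simp only [walkDist, ← sum_div, ← Nat.cast_sum, ← hcount]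
  push_cast
  exact div_self (pow_ne_zero _ (by exact_mod_cast Fintype.card_ne_zero))

noncomputable def uniformDeviation (n : ℕ) : ℝ :=
  ∑ σ, |walkDist a n σ - (Fintype.card G : ℝ)⁻¹|

theorem uniformDeviation_nonneg (n : ℕ) : 0 ≤ uniformDeviation a n :=
  sum_nonneg fun _ _ => abs_nonneg _

theorem uniformDeviation_add_le [Nonempty ι] (n k : ℕ) {ε : ℝ} (hε : ∀ σ, ε ≤ walkDist a k σ) :
    uniformDeviation a (n + k) ≤ (1 - Fintype.card G * ε) * uniformDeviation a n := by
  -- `p_n - 1/|G|` has total mass `0`, so lowering `p_k` by the constant `ε` leaves the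
  -- convolution unchanged while making it a nonnegative function of mass `1 - |G| ε`.
  have hconv : ∀ σ, walkDist a (n + k) σ - (Fintype.card G : ℝ)⁻¹
      = ∑ τ, (walkDist a n τ - (Fintype.card G : ℝ)⁻¹) * (walkDist a k (τ⁻¹ * σ) - ε) := by
    intro σ
    rw [walkDist_add]
    simp only [sub_mul, mul_sub, sum_sub_distrib, ← sum_mul, ← mul_sum,
      sum_comp_inv_mul, sum_walkDist, sum_const, card_univ, nsmul_eq_mul]
    field_simp
    ring
  unfold uniformDeviation
  calc ∑ σ, |walkDist a (n + k) σ - (Fintype.card G : ℝ)⁻¹|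
      = ∑ σ, |∑ τ, (walkDist a n τ - (Fintype.card G : ℝ)⁻¹) *
          (walkDist a k (τ⁻¹ * σ) - ε)| := by
        simp only [hconv]
    _ ≤ (∑ τ, |walkDist a n τ - (Fintype.card G : ℝ)⁻¹|) * ∑ σ, (walkDist a k σ - ε) :=
        sum_abs_conv_le (fun τ => walkDist a n τ - (Fintype.card G : ℝ)⁻¹)
          (fun ρ => walkDist a k ρ - ε) fun ρ => sub_nonneg.2 (hε ρ)
    _ = (1 - Fintype.card G * ε) * ∑ τ, |walkDist a n τ - (Fintype.card G : ℝ)⁻¹| := by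
        rw [sum_sub_distrib, sum_walkDist, sum_const, card_univ, nsmul_eq_mul, mul_comm]

theorem uniformDeviation_antitone [Nonempty ι] : Antitone (uniformDeviation a) :=
  antitone_nat_of_succ_le fun n => by
    simpa using uniformDeviation_add_le a n 1 (walkDist_nonneg a 1)

theorem tendsto_uniformDeviation_zero [Nonempty ι] {k : ℕ} (hk : ∀ σ, 0 < walkDist a k σ) :
    Tendsto (uniformDeviation a) atTop (𝓝 0) := by
  obtain ⟨σ₀, hσ₀⟩ := Finite.exists_min (walkDist a k)
  have hc : 0 < Fintype.card G * walkDist a k σ₀ :=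
    mul_pos (by exact_mod_cast Fintype.card_pos) (hk σ₀)
  have hlim := tendsto_atTop_ciInf (uniformDeviation_antitone a)
    ⟨0, Set.forall_mem_range.2 (uniformDeviation_nonneg a)⟩
  have hL : 0 ≤ ⨅ n, uniformDeviation a n := le_ciInf (uniformDeviation_nonneg a)
  have hle := le_of_tendsto_of_tendsto' (hlim.comp (tendsto_add_atTop_nat k))
    (hlim.const_mul _) fun n => uniformDeviation_add_le a n k hσ₀
  rwa [show ⨅ n, uniformDeviation a n = 0 by nlinarith] at hlim

theorem tendsto_walkDist_of_pos [Nonempty ι] {k : ℕ} (hk : ∀ σ, 0 < walkDist a k σ) :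
    Tendsto (walkDist a) atTop (𝓝 fun _ => (Fintype.card G : ℝ)⁻¹) := by
  refine tendsto_pi_nhds.2 fun σ => tendsto_sub_nhds_zero_iff.1 ?_
  refine squeeze_zero_norm (fun n => ?_) (tendsto_uniformDeviation_zero a hk)
  exact single_le_sum (f := fun τ => |walkDist a n τ - (Fintype.card G : ℝ)⁻¹|)
    (fun _ _ => abs_nonneg _) (mem_univ σ)

theorem tendsto_walkDist_uniform_iff :
    Tendsto (walkDist a) atTop (𝓝 fun _ => (Fintype.card G : ℝ)⁻¹) ↔
      ∃ m, 0 < m ∧ ∀ σ, ∃ L : List ι, L.length = m ∧ (L.map a).prod = σ := by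
  simp_rw [← walkDist_pos_iff]
  constructor
  · intro h
    have hpos : ∀ᶠ m in atTop, ∀ σ, 0 < walkDist a m σ :=
      eventually_all.2 fun σ =>
        (tendsto_pi_nhds.1 h σ).eventually_const_lt (by simpa using Fintype.card_pos)
    obtain ⟨m, hm, hm0⟩ := (hpos.and (eventually_gt_atTop 0)).exists
    exact ⟨m, hm0, hm⟩
  · rintro ⟨m, hm0, hm⟩
    obtain ⟨L, hL, -⟩ := (walkDist_pos_iff a m 1).1 (hm 1)
    have : Nonempty ι := ⟨L.head (List.ne_nil_of_length_pos (hL ▸ hm0))⟩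
    exact tendsto_walkDist_of_pos a hm

end WalkDistribution

theorem neutralOrientation_iff_compositions_of_fixed_length_general
    (b d : ℕ) (a : Fin (b ^ d) → Equiv.Perm (Fin d)) :
    NeutralOrientation a ↔
      ∃ m : ℕ, 0 < m ∧ ∀ σ : Equiv.Perm (Fin d),
        ∃ L : List (Fin (b ^ d)), L.length = m ∧ (L.map a).prod = σ := by
  have hcard : (Fintype.card (Equiv.Perm (Fin d)) : ℝ) = d.factorial := by
    rw [Fintype.card_perm, Fintype.card_fin]
  rw [NeutralOrientation, ← hcard]
  exact tendsto_walkDist_uniform_iff a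

/-- A `d`-dimensional `b`-regular mono-curve with subregion permutations
`a(0), ..., a(b^d - 1)` has neutral orientation if and only if there exists a positive
integer `m` such that every permutation in `S_d` can be written as a composition of
exactly `m` permutations from the multiset `{a(0), ..., a(b^d - 1)}`. -/
theorem neutralOrientation_iff_compositions_of_fixed_length
    (b d : ℕ) (hb : 2 ≤ b) (hd : 1 ≤ d) (a : Fin (b ^ d) → Equiv.Perm (Fin d)) :
    NeutralOrientation a ↔
      ∃ m : ℕ, 0 < m ∧ ∀ σ : Equiv.Perm (Fin d),
        ∃ L : List (Fin (b ^ d)), L.length = m ∧ (L.map a).prod = σ :=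
  neutralOrientation_iff_compositions_of_fixed_length_general b d a
end

section
/- Let a: {0,...,3^d - 1} -> S_d be defined as in the d-dimensional Meurthe curve: for a ternary number r, the inverse permutation a^{-1}(r) is obtained from the identity by moving all indices i with r_i in {0,1} to the front and reversing their order. Then for d >= 2, every permutation of S_d can be expressed as a composition of exactly (d+1)d(d-1)/2 permutations from the set {a(r) : r a d-digit ternary number}; consequently the Meurthe curves have neutral orientation. -/
/-- The value sequence of the inverse of the Meurthe permutation of a `(n+1)`-digit
ternary number `r`: it is obtained from the identity permutation `(0, 1, ..., n)` by
moving all indices `h` with `r h ∈ {0, 1}` to the front and reversing their order,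
the indices `h` with `r h = 2` keeping their relative order at the back. -/
def meurtheInvList (n : ℕ) (r : Fin (n + 1) → Fin 3) : List (Fin (n + 1)) :=
  ((List.finRange (n + 1)).filter (fun h => r h ≠ 2)).reverse
    ++ (List.finRange (n + 1)).filter (fun h => r h = 2)
/-!
The Meurthe permutations contain the identity `a(2…2)`, the transposition `(0 1) = a(002…2)`
and the rotation `c = a(2…20)`. Conjugating `(0 1)` by `c ^ i` gives the adjacent
transposition `(i i+1)` as a word of length `d + 1`, and bubble sort writes every permutation
as a product of at most `d(d-1)/2` adjacent transpositions; padding with the identity gives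
words of length exactly `N = (d+1)d(d-1)/2`.

Hence after `N` steps of the random walk every permutation has probability at least
`ε = 3^(-dN)`. Writing `p_m` for the distribution after `m` steps and `u = 1/d!`, this gives the
Doeblin contraction `∑ |p_(N+m) - u| ≤ (1 - d! ε) ∑ |p_m - u|`, so `p_m → u`.
-/

open Finset Filter Topology Equiv Equiv.Perm

namespace Fin

theorem cycleIcc_castSucc_succ {n : ℕ} (i : Fin n) :
    cycleIcc i.castSucc i.succ = swap i.castSucc i.succ := by
  ext x
  rcases lt_trichotomy x i.castSucc with hx | rfl | hx
  · rw [cycleIcc_of_lt hx, swap_apply_of_ne_of_ne hx.ne (hx.trans castSucc_lt_succ).ne]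
  · rw [cycleIcc_of_ge_of_lt le_rfl castSucc_lt_succ, swap_apply_left, coeSucc_eq_succ]
  · rcases (castSucc_lt_iff_succ_le.mp hx).eq_or_lt with rfl | hx'
    · rw [cycleIcc_of_last castSucc_lt_succ.le, swap_apply_right]
    · rw [cycleIcc_of_gt hx', swap_apply_of_ne_of_ne hx.ne' hx'.ne']

theorem exists_list_prod_swap_eq_cycleIcc {n : ℕ} {i j : Fin (n + 1)} (hij : i ≤ j) :
    ∃ L : List (Fin n), L.length = (j : ℕ) - i ∧
      (L.map fun t => swap t.castSucc t.succ).prod = cycleIcc i j := by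
  induction j using Fin.induction with
  | zero =>
    exact ⟨[], by simp, by rw [le_zero_iff.mp hij, cycleIcc_eq, List.map_nil, List.prod_nil]⟩
  | succ t ih =>
    rcases hij.eq_or_lt with rfl | hlt
    · exact ⟨[], by simp, by rw [cycleIcc_eq, List.map_nil, List.prod_nil]⟩
    have hit : i ≤ t.castSucc := le_castSucc_iff.mpr hlt
    obtain ⟨L, hlen, hprod⟩ := ih hit
    have htrans : cycleIcc i t.castSucc * cycleIcc t.castSucc t.succ = cycleIcc i t.succ :=
      DFunLike.coe_injective (by rw [Perm.coe_mul]; exact cycleIcc.trans hit castSucc_lt_succ.le)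
    refine ⟨L ++ [t], ?_, ?_⟩
    · have : (i : ℕ) ≤ t := hit
      simp only [List.length_append, hlen, List.length_singleton, val_castSucc, val_succ]
      omega
    · rw [List.map_append, List.prod_append, hprod, List.map_singleton, List.prod_singleton,
        ← cycleIcc_castSucc_succ, htrans]

end Fin

namespace Equiv.Perm

theorem exists_list_prod_swap_castSucc_succ_of_forall_le {n k : ℕ} (hk : k ≤ n + 1)
    (σ : Perm (Fin (n + 1))) (hσ : ∀ i : Fin (n + 1), k ≤ i → σ i = i) :
    ∃ L : List (Fin n), L.length ≤ k.choose 2 ∧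
      (L.map fun t => swap t.castSucc t.succ).prod = σ := by
  induction k generalizing σ with
  | zero => exact ⟨[], by simp, by ext i; simp [hσ i (Nat.zero_le _)]⟩
  | succ k ih =>
    set top : Fin (n + 1) := ⟨k, hk⟩
    have hσj : σ top ≤ top := by
      by_contra! h
      exact h.ne (σ.injective (hσ _ h)).symm
    obtain ⟨L₀, hlen₀, hprod₀⟩ := Fin.exists_list_prod_swap_eq_cycleIcc hσj
    have hτ : ∀ i : Fin (n + 1), k ≤ i → ((Fin.cycleIcc (σ top) top)⁻¹ * σ) i = i := by
      intro i hi
      rw [Perm.mul_apply, Perm.inv_eq_iff_eq]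
      rcases hi.eq_or_lt with hi | hi
      · rw [show i = top from Fin.ext hi.symm, Fin.cycleIcc_of_last hσj]
      · rw [hσ i hi, Fin.cycleIcc_of_gt (show top < i from hi)]
    obtain ⟨L, hlen, hprod⟩ := ih (by omega) _ hτ
    refine ⟨L₀ ++ L, ?_, ?_⟩
    · have hchoose : (k + 1).choose 2 = k.choose 2 + k := by
        rw [Nat.choose_succ_succ', Nat.choose_one_right, add_comm]
      have : L₀.length ≤ k := hlen₀ ▸ Nat.sub_le _ _
      rw [List.length_append, hchoose]
      omega
    · rw [List.map_append, List.prod_append, hprod₀, hprod, mul_inv_cancel_left]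

theorem exists_list_prod_swap_castSucc_succ {n : ℕ} (σ : Perm (Fin (n + 1))) :
    ∃ L : List (Fin n), L.length ≤ (n + 1).choose 2 ∧
      (L.map fun t => swap t.castSucc t.succ).prod = σ :=
  exists_list_prod_swap_castSucc_succ_of_forall_le le_rfl σ fun i hi => absurd i.isLt (by omega)

end Equiv.Perm

theorem finRotate_pow_val_apply {n : ℕ} (k i : Fin n) : (finRotate n ^ (k : ℕ)) i = i + k := by
  rw [Perm.coe_pow, ← finCycle_eq_finRotate_iterate, finCycle_apply]

theorem finRotate_pow_card (n : ℕ) : finRotate (n + 2) ^ (n + 2) = 1 := by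
  have h : orderOf (finRotate (n + 2)) = n + 2 := by
    rw [isCycle_finRotate.orderOf, support_finRotate, Finset.card_univ, Fintype.card_fin]
  simpa only [h] using pow_orderOf_eq_one (finRotate (n + 2))

theorem swap_castSucc_succ_eq_finRotate_conj {n : ℕ} (i : Fin (n + 1)) :
    swap i.castSucc i.succ =
      finRotate (n + 2) ^ (i : ℕ) * swap 0 1 * finRotate (n + 2) ^ (n + 2 - i) := by
  have hinv : finRotate (n + 2) ^ (n + 2 - i) = (finRotate (n + 2) ^ (i : ℕ))⁻¹ := by
    refine eq_inv_of_mul_eq_one_left ?_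
    rw [← pow_add, Nat.sub_add_cancel (by omega), finRotate_pow_card]
  have h0 : (finRotate (n + 2) ^ (i : ℕ)) 0 = i.castSucc := by
    simpa using finRotate_pow_val_apply i.castSucc 0
  have h1 : (finRotate (n + 2) ^ (i : ℕ)) 1 = i.succ := by
    rw [← Fin.val_castSucc, finRotate_pow_val_apply, add_comm (1 : Fin (n + 2))]
    exact Fin.coeSucc_eq_succ
  rw [hinv, ← swap_apply_apply, h0, h1]

namespace List

theorem exists_length_eq_mul_prod_map {M ι κ : Type*} [Monoid M] {a : ι → M} {b : κ → M}
    {m : ℕ} (hb : ∀ k, ∃ L : List ι, L.length = m ∧ (L.map a).prod = b k) (K : List κ) :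
    ∃ L : List ι, L.length = m * K.length ∧ (L.map a).prod = (K.map b).prod := by
  induction K with
  | nil => exact ⟨[], by simp, by simp⟩
  | cons k K ih =>
    obtain ⟨L₁, hlen₁, hprod₁⟩ := hb k
    obtain ⟨L₂, hlen₂, hprod₂⟩ := ih
    refine ⟨L₁ ++ L₂, ?_, ?_⟩
    · rw [length_append, hlen₁, hlen₂, length_cons, Nat.mul_succ, add_comm]
    · rw [map_append, prod_append, hprod₁, hprod₂, map_cons, prod_cons]

theorem exists_length_eq_prod_map_of_le {M ι : Type*} [Monoid M] {a : ι → M} {e : ι}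
    (he : a e = 1) {L : List ι} {N : ℕ} (hL : L.length ≤ N) :
    ∃ L' : List ι, L'.length = N ∧ (L'.map a).prod = (L.map a).prod :=
  ⟨L ++ replicate (N - L.length) e, by simp [hL], by simp [he]⟩

end List

theorem exists_list_length_eq_prod_map_of_swap_of_finRotate {ι : Type*} {n : ℕ}
    {a : ι → Perm (Fin (n + 2))} {e s c : ι} (he : a e = 1) (hs : a s = swap 0 1)
    (hc : a c = finRotate (n + 2)) (σ : Perm (Fin (n + 2))) :
    ∃ L : List ι, L.length = (n + 3) * (n + 2) * (n + 1) / 2 ∧ (L.map a).prod = σ := by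
  obtain ⟨K, hK, rfl⟩ := exists_list_prod_swap_castSucc_succ σ
  have hswap (i : Fin (n + 1)) :
      ∃ L : List ι, L.length = n + 3 ∧ (L.map a).prod = swap i.castSucc i.succ :=
    ⟨List.replicate i c ++ s :: List.replicate (n + 2 - i) c, by simp; omega,
      by simp [hs, hc, swap_castSucc_succ_eq_finRotate_conj, mul_assoc]⟩
  obtain ⟨L, hL, hprod⟩ := List.exists_length_eq_mul_prod_map hswap K
  have hN : (n + 3) * (n + 2) * (n + 1) / 2 = (n + 3) * (n + 2).choose 2 := by
    rw [Nat.choose_two_right, mul_assoc]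
    exact Nat.mul_div_assoc _ (Nat.even_mul_pred_self (n + 2)).two_dvd
  rw [← hprod, hN]
  exact List.exists_length_eq_prod_map_of_le he (hL ▸ Nat.mul_le_mul_left _ hK)

theorem tendsto_zero_of_add_le_mul {E : ℕ → ℝ} {C ρ : ℝ} {N : ℕ} (hN : 0 < N)
    (hE : ∀ m, 0 ≤ E m) (hC : ∀ m, E m ≤ C) (hρ₀ : 0 ≤ ρ) (hρ₁ : ρ < 1)
    (hcontr : ∀ m, E (N + m) ≤ ρ * E m) : Tendsto E atTop (𝓝 0) := by
  have hiter (k m : ℕ) : E (k * N + m) ≤ ρ ^ k * C := by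
    induction k with
    | zero => simpa using hC m
    | succ k ih =>
      calc E ((k + 1) * N + m) = E (N + (k * N + m)) := by ring_nf
        _ ≤ ρ * (ρ ^ k * C) := (hcontr _).trans (mul_le_mul_of_nonneg_left ih hρ₀)
        _ = ρ ^ (k + 1) * C := by ring
  have hbound (m : ℕ) : E m ≤ ρ ^ (m / N) * C := by
    simpa only [Nat.div_add_mod'] using hiter (m / N) (m % N)
  have hlim : Tendsto (fun m => ρ ^ (m / N) * C) atTop (𝓝 0) := by
    simpa using ((tendsto_pow_atTop_nhds_zero_of_lt_one hρ₀ hρ₁).comp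
      (Nat.tendsto_div_const_atTop hN.ne')).mul_const C
  exact squeeze_zero hE hbound hlim

theorem sum_abs_conv_sub_le {G : Type*} [Group G] [Fintype G] {p q : G → ℝ} {u ε : ℝ}
    (hq : ∀ h, ε ≤ q h) (hq₁ : ∑ h, q h = 1) (hp₁ : ∑ g, p g = 1)
    (hu : Fintype.card G * u = 1) :
    ∑ g, |∑ h, q h * p (h⁻¹ * g) - u| ≤ (1 - Fintype.card G * ε) * ∑ g, |p g - u| := by
  -- the uniform part `ε` of `q` maps `p` to `u` exactly, so only `q - ε ≥ 0` remains
  have hsplit (g : G) :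
      ∑ h, q h * p (h⁻¹ * g) - u = ∑ h, (q h - ε) * (p (h⁻¹ * g) - u) := by
    have : ∑ h, p (h⁻¹ * g) = 1 :=
      (Fintype.sum_equiv ((Equiv.inv G).trans (Equiv.mulRight g)) _ _ fun _ => rfl).trans hp₁
    simp only [sub_mul, mul_sub, sum_sub_distrib, ← mul_sum, ← sum_mul, this, hq₁, sum_const,
      card_univ, nsmul_eq_mul]
    linear_combination (-ε) * hu
  calc ∑ g, |∑ h, q h * p (h⁻¹ * g) - u|
      ≤ ∑ g, ∑ h, (q h - ε) * |p (h⁻¹ * g) - u| := by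
        refine sum_le_sum fun g _ => ?_
        rw [hsplit]
        refine (abs_sum_le_sum_abs _ _).trans_eq (sum_congr rfl fun h _ => ?_)
        rw [abs_mul, abs_of_nonneg (sub_nonneg.mpr (hq h))]
    _ = ∑ h, (q h - ε) * ∑ g, |p g - u| := by
        rw [sum_comm]
        refine sum_congr rfl fun h _ => ?_
        rw [← mul_sum]
        exact congrArg _ (Fintype.sum_equiv (Equiv.mulLeft h⁻¹) _ _ fun _ => rfl)
    _ = (1 - Fintype.card G * ε) * ∑ g, |p g - u| := by
        rw [← sum_mul, sum_sub_distrib, hq₁, sum_const, card_univ, nsmul_eq_mul]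

section RandomWalk

variable {G ι : Type*} [Group G] [DecidableEq G] [Fintype ι] (a : ι → G)

def wordCount (m : ℕ) (g : G) : ℕ :=
  #{R : Fin m → ι | (List.ofFn fun t => a (R t)).prod = g}

noncomputable def walkProb (m : ℕ) (g : G) : ℝ :=
  wordCount a m g / (Fintype.card ι : ℝ) ^ m

theorem wordCount_pos {L : List ι} {g : G} (hg : (L.map a).prod = g) :
    0 < wordCount a L.length g :=
  card_pos.mpr ⟨L.get, by simp [← hg]⟩

theorem wordCount_add [Fintype G] (k m : ℕ) (g : G) :
    wordCount a (k + m) g = ∑ h, wordCount a k h * wordCount a m (h⁻¹ * g) := by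
  simp only [wordCount, card_filter, sum_mul_sum, ite_mul, one_mul, zero_mul]
  rw [← (Fin.appendEquiv (α := ι) k m).sum_comp, Fintype.sum_prod_type]
  conv_rhs => rw [sum_comm]
  refine sum_congr rfl fun R₁ _ => ?_
  rw [sum_comm]
  refine sum_congr rfl fun R₂ _ => ?_
  simp [List.ofFn_add, eq_inv_mul_iff_mul_eq]

theorem sum_wordCount [Fintype G] (m : ℕ) : ∑ g, wordCount a m g = Fintype.card ι ^ m := by
  simp only [wordCount]
  rw [← card_eq_sum_card_fiberwise fun _ _ => mem_univ _, card_univ, Fintype.card_fun,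
    Fintype.card_fin]

theorem walkProb_nonneg (m : ℕ) (g : G) : 0 ≤ walkProb a m g := by
  unfold walkProb; positivity

theorem sum_walkProb [Fintype G] [Nonempty ι] (m : ℕ) : ∑ g, walkProb a m g = 1 := by
  simp only [walkProb, ← sum_div]
  exact div_eq_one_iff_eq (by positivity) |>.mpr (by exact_mod_cast sum_wordCount a m)

theorem walkProb_add [Fintype G] (k m : ℕ) (g : G) :
    walkProb a (k + m) g = ∑ h, walkProb a k h * walkProb a m (h⁻¹ * g) := by
  simp only [walkProb, wordCount_add, div_mul_div_comm, ← sum_div, pow_add]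
  push_cast
  rfl

theorem tendsto_walkProb [Fintype G] {N : ℕ} (hN : 0 < N)
    (hgen : ∀ g, ∃ L : List ι, L.length = N ∧ (L.map a).prod = g) :
    Tendsto (walkProb a) atTop (𝓝 fun _ => (Fintype.card G : ℝ)⁻¹) := by
  have : Nonempty ι := by
    obtain ⟨L, hL, -⟩ := hgen 1
    exact ⟨L.head (List.ne_nil_of_length_pos (hL ▸ hN))⟩
  set u : ℝ := (Fintype.card G : ℝ)⁻¹
  have hu : Fintype.card G * u = 1 := mul_inv_cancel₀ (by positivity)
  have hε : ∀ g, ((Fintype.card ι : ℝ) ^ N)⁻¹ ≤ walkProb a N g := fun g => by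
    obtain ⟨L, hLN, hL⟩ := hgen g
    rw [walkProb, ← one_div]
    gcongr
    exact_mod_cast hLN ▸ wordCount_pos a hL
  have hGε : Fintype.card G * ((Fintype.card ι : ℝ) ^ N)⁻¹ ≤ 1 := by
    simpa [sum_walkProb] using sum_le_sum fun g (_ : g ∈ univ) => hε g
  set E : ℕ → ℝ := fun m => ∑ g, |walkProb a m g - u|
  have hE₂ (m : ℕ) : E m ≤ 2 := by
    calc E m ≤ ∑ g, (walkProb a m g + u) :=
          sum_le_sum fun g _ => (abs_sub _ _).trans_eq (by
            rw [abs_of_nonneg (walkProb_nonneg a m g),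
              abs_of_nonneg (inv_nonneg.mpr (Nat.cast_nonneg _))])
      _ = 2 := by
          rw [sum_add_distrib, sum_walkProb, sum_const, card_univ, nsmul_eq_mul, hu]
          norm_num
  have hE : Tendsto E atTop (𝓝 0) := by
    refine tendsto_zero_of_add_le_mul hN (fun m => sum_nonneg fun g _ => abs_nonneg _) hE₂
      (sub_nonneg.mpr hGε) (sub_lt_self _ (by positivity)) fun m => ?_
    simp only [E, walkProb_add]
    exact sum_abs_conv_sub_le hε (sum_walkProb a N) (sum_walkProb a m) hu
  refine tendsto_pi_nhds.mpr fun g =>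
    tendsto_sub_nhds_zero_iff.mp (squeeze_zero_norm (fun m => ?_) hE)
  exact single_le_sum (f := fun g => |walkProb a m g - u|) (fun g _ => abs_nonneg _) (mem_univ g)

end RandomWalk

theorem neutralOrientation_of_forall_exists_list {d : ℕ} {ι : Type} [Fintype ι]
    {a : ι → Perm (Fin d)} {N : ℕ} (hN : 0 < N)
    (hgen : ∀ σ, ∃ L : List ι, L.length = N ∧ (L.map a).prod = σ) :
    NeutralOrientation a := by
  have := tendsto_walkProb a hN hgen
  rwa [Fintype.card_perm, Fintype.card_fin] at this

section Meurthe

variable {n : ℕ}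

theorem meurthe_eq_of_meurtheInvList_eq_ofFn {a : (Fin (n + 2) → Fin 3) → Perm (Fin (n + 2))}
    (ha : ∀ (r : Fin (n + 2) → Fin 3) (i : Fin (n + 2)),
      (meurtheInvList (n + 1) r)[(i : ℕ)]? = some ((a r).symm i))
    {r : Fin (n + 2) → Fin 3} {σ : Perm (Fin (n + 2))}
    (h : meurtheInvList (n + 1) r = List.ofFn σ.symm) : a r = σ := by
  have hsymm : (a r).symm = σ.symm := Equiv.ext fun i => by
    simpa only [h, List.getElem?_ofFn, i.isLt, Fin.eta, dite_true, Option.some.injEq]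
      using (ha r i).symm
  simpa using congrArg Equiv.symm hsymm

theorem meurtheInvList_const_two :
    meurtheInvList n (fun _ => 2) = List.ofFn (1 : Perm (Fin (n + 1))).symm := by
  simp only [meurtheInvList, ne_eq, not_true_eq_false, decide_false, List.filter_false,
    List.reverse_nil, List.nil_append, decide_true, List.filter_true, ← List.ofFn_id]
  rfl

theorem meurtheInvList_swap :
    meurtheInvList (n + 1) (fun h => if (h : ℕ) < 2 then 0 else 2)
      = List.ofFn (swap (0 : Fin (n + 2)) 1).symm := by
  have hfix (i : Fin n) : swap (0 : Fin (n + 2)) 1 i.succ.succ = i.succ.succ :=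
    swap_apply_of_ne_of_ne (Fin.succ_ne_zero _) (Fin.succ_succ_ne_one _)
  simp [meurtheInvList, List.finRange_succ, List.ofFn_succ, List.filter_map, Function.comp_def,
    hfix, List.ofFn_eq_map]

theorem meurtheInvList_rotate :
    meurtheInvList (n + 1) (fun h => if h = Fin.last (n + 1) then 0 else 2)
      = List.ofFn (finRotate (n + 2)).symm := by
  have h0 : (finRotate (n + 2)).symm 0 = Fin.last (n + 1) := by
    rw [symm_apply_eq, finRotate_last]
  have hsucc (i : Fin (n + 1)) : (finRotate (n + 2)).symm i.succ = i.castSucc := by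
    rw [symm_apply_eq, finRotate_apply, Fin.coeSucc_eq_succ]
  rw [List.ofFn_succ, h0]
  simp only [hsucc]
  rw [meurtheInvList, List.finRange_succ_last, List.ofFn_eq_map]
  simp [List.filter_map, Function.comp_def, Fin.castSucc_ne_last]

end Meurthe

/-- Let `a` assign to each `d`-digit ternary number `r` (here `d = n + 2 ≥ 2`) the
Meurthe permutation, i.e. the permutation whose inverse is obtained from the identity
by moving all indices `i` with `r_i ∈ {0,1}` to the front and reversing their order.
Then every permutation of `S_d` can be expressed as a composition of exactly
`(d+1)d(d-1)/2` permutations from the set `{a(r)}`; consequently the Meurthe curves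
have neutral orientation. -/
theorem meurthe_compositions_and_neutralOrientation
    (n : ℕ) (a : (Fin (n + 2) → Fin 3) → Equiv.Perm (Fin (n + 2)))
    (ha : ∀ (r : Fin (n + 2) → Fin 3) (i : Fin (n + 2)),
      (meurtheInvList (n + 1) r)[(i : ℕ)]? = some ((a r).symm i)) :
    (∀ σ : Equiv.Perm (Fin (n + 2)),
      ∃ L : List (Fin (n + 2) → Fin 3),
        L.length = (n + 3) * (n + 2) * (n + 1) / 2 ∧ (L.map a).prod = σ) ∧
    NeutralOrientation a := by
  have hgen := exists_list_length_eq_prod_map_of_swap_of_finRotate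
    (meurthe_eq_of_meurtheInvList_eq_ofFn ha meurtheInvList_const_two)
    (meurthe_eq_of_meurtheInvList_eq_ofFn ha meurtheInvList_swap)
    (meurthe_eq_of_meurtheInvList_eq_ofFn ha meurtheInvList_rotate)
  have hN : 0 < (n + 3) * (n + 2) * (n + 1) / 2 := Nat.div_pos (by ring_nf; omega) two_pos
  exact ⟨hgen, neutralOrientation_of_forall_exists_list hN hgen⟩
end

section
/- Define the harmonious Hilbert permutation a(r) in S_d for a d-bit binary number r by: if r_i ≠ r_{d-1}, then a(i) is the number of indices j in {i+1,...,d-1} with r_j ≠ r_{d-1}; if r_i = r_{d-1}, then a(i) = d-1 minus the number of indices j in {0,...,i-1} with r_j = r_{d-1}. Then a(r) is a well-defined permutation of {0,...,d-1}, and its inverse is obtained from the identity permutation by moving all indices i with r_i ≠ r_{d-1} to the front in reversed order, and reversing the order of the remaining indices as well. -/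
/-- The value sequence of the inverse of the harmonious Hilbert permutation of a
`(n+1)`-bit binary string `r`: it is obtained from the identity permutation
`(0, 1, ..., n)` by moving all indices `h` with `r h ≠ r_{d-1}` (where `r_{d-1}` is the
last bit) to the front in reversed order, and reversing the order of the remaining
indices (those with `r h = r_{d-1}`) as well. -/
def harmoniousInvList (n : ℕ) (r : Fin (n + 1) → Fin 2) : List (Fin (n + 1)) :=
  ((List.finRange (n + 1)).filter (fun h => r h ≠ r (Fin.last n))).reverse
    ++ ((List.finRange (n + 1)).filter (fun h => r h = r (Fin.last n))).reverse

lemma countP_get {m : ℕ} : ∀ (l : List (Fin m)), l.Pairwise (· < ·) → ∀ i : Fin m, i ∈ l →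
    l[l.countP (fun j => decide (j < i))]? = some i
  | [], _, i, hi => by simp at hi
  | a :: t, hp, i, hi => by
    rcases List.mem_cons.mp hi with rfl | hi'
    · have : (i :: t).countP (fun j => decide (j < i)) = 0 := by
        rw [List.countP_eq_zero]
        intro j hj
        rcases List.mem_cons.mp hj with rfl | hj'
        · simp
        · have := (List.pairwise_cons.mp hp).1 j hj'
          simp [this.asymm]
      simp [this]
    · have h1 : a < i := (List.pairwise_cons.mp hp).1 i hi'
      have : (a :: t).countP (fun j => decide (j < i)) =
          t.countP (fun j => decide (j < i)) + 1 := by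
        rw [List.countP_cons]; simp [h1]
      rw [this]
      simpa using countP_get t (List.pairwise_cons.mp hp).2 i hi'

lemma card_eq_countP {m : ℕ} (q : Fin m → Prop) [DecidablePred q] :
    (Finset.univ.filter q).card = (List.finRange m).countP (fun j => decide (q j)) := by
  rw [Fin.univ_def]
  simp [Finset.filter, Finset.card, List.countP_eq_length_filter]

lemma card_split {m : ℕ} (q : Fin m → Prop) [DecidablePred q] (i : Fin m) (hq : q i) :
    (Finset.univ.filter q).card =
      (Finset.univ.filter fun j => j < i ∧ q j).card +
      (Finset.univ.filter fun j => i < j ∧ q j).card + 1 := by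
  classical
  have h1 : (Finset.univ.filter q) = ((Finset.univ.filter fun j => j < i ∧ q j) ∪
      (Finset.univ.filter fun j => i < j ∧ q j)) ∪ {i} := by
    ext j
    simp only [Finset.mem_union, Finset.mem_filter, Finset.mem_univ, true_and,
      Finset.mem_singleton]
    constructor
    · intro hj
      rcases lt_trichotomy j i with h | h | h
      · exact Or.inl (Or.inl ⟨h, hj⟩)
      · exact Or.inr h
      · exact Or.inl (Or.inr ⟨h, hj⟩)
    · rintro ((⟨_, h⟩ | ⟨_, h⟩) | rfl)
      · exact h
      · exact h
      · exact hq
  have d1 : Disjoint (Finset.univ.filter fun j => j < i ∧ q j)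
      (Finset.univ.filter fun j => i < j ∧ q j) := by
    simp only [Finset.disjoint_left, Finset.mem_filter]
    rintro j ⟨_, h1, _⟩ ⟨_, h2, _⟩
    exact absurd h2 h1.asymm
  have d2 : Disjoint ((Finset.univ.filter fun j => j < i ∧ q j) ∪
      (Finset.univ.filter fun j => i < j ∧ q j)) ({i} : Finset (Fin m)) := by
    simp only [Finset.disjoint_right, Finset.mem_union, Finset.mem_filter,
      Finset.mem_singleton, Finset.mem_univ, true_and]
    rintro j rfl
    rintro (⟨h, _⟩ | ⟨h, _⟩) <;> exact absurd h (lt_irrefl _)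
  rw [h1, Finset.card_union_of_disjoint d2, Finset.card_union_of_disjoint d1,
    Finset.card_singleton]

/-- Define the harmonious Hilbert permutation `a(r) ∈ S_d` of a `d`-bit binary string
`r` (here `d = n + 1`) by: if `r_i ≠ r_{d-1}` then `a(i)` is the number of indices
`j ∈ {i+1, ..., d-1}` with `r_j ≠ r_{d-1}`; if `r_i = r_{d-1}` then `a(i)` is `d - 1`
minus the number of indices `j ∈ {0, ..., i-1}` with `r_j = r_{d-1}`.  Then `a(r)` is
a well-defined permutation of `{0, ..., d-1}`, and its inverse is obtained from the
identity permutation by moving all indices `i` with `r_i ≠ r_{d-1}` to the front in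
reversed order, and reversing the order of the remaining indices as well. -/
theorem harmonious_permutation_well_defined (n : ℕ) (r : Fin (n + 1) → Fin 2) :
    ∃! a : Equiv.Perm (Fin (n + 1)),
      (∀ i : Fin (n + 1), (a i : ℕ) =
        if r i ≠ r (Fin.last n)
        then (Finset.univ.filter
            (fun j : Fin (n + 1) => i < j ∧ r j ≠ r (Fin.last n))).card
        else n - (Finset.univ.filter
            (fun j : Fin (n + 1) => j < i ∧ r j = r (Fin.last n))).card) ∧
      (∀ i : Fin (n + 1),
        (harmoniousInvList n r)[(i : ℕ)]? = some (a.symm i)) := by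
  classical
  set c := r (Fin.last n) with hc
  set l1 : List (Fin (n + 1)) :=
    (List.finRange (n + 1)).filter (fun h => r h ≠ c) with hl1
  set l2 : List (Fin (n + 1)) :=
    (List.finRange (n + 1)).filter (fun h => r h = c) with hl2
  set L : List (Fin (n + 1)) := harmoniousInvList n r with hLdef
  have hL : L = l1.reverse ++ l2.reverse := rfl
  have len1 : l1.length = (Finset.univ.filter fun j => r j ≠ c).card := by
    rw [card_eq_countP, hl1, ← List.countP_eq_length_filter]
  have len2 : l2.length = (Finset.univ.filter fun j => r j = c).card := by
    rw [card_eq_countP, hl2, ← List.countP_eq_length_filter]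
  have lensum : l1.length + l2.length = n + 1 := by
    rw [len1, len2]
    have h2 : (Finset.univ.filter fun j => ¬ (r j ≠ c)) =
        (Finset.univ.filter fun j => r j = c) := by
      ext j; simp [not_not]
    have := Finset.card_filter_add_card_filter_not
      (s := (Finset.univ : Finset (Fin (n + 1)))) (p := fun j => r j ≠ c)
    rw [h2] at this
    simpa using this
  have lenL : L.length = n + 1 := by
    rw [hL]; simp only [List.length_append, List.length_reverse]; omega
  have nd : L.Nodup := by
    rw [hL]
    refine List.Nodup.append ?_ ?_ ?_
    · exact List.nodup_reverse.mpr ((List.nodup_finRange _).filter _)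
    · exact List.nodup_reverse.mpr ((List.nodup_finRange _).filter _)
    · intro x hx1 hx2
      rw [List.mem_reverse, List.mem_filter] at hx1 hx2
      simp only [decide_eq_true_eq] at hx1 hx2
      exact hx1.2 hx2.2
  set f : Fin (n + 1) → Fin (n + 1) := fun k => L.get (Fin.cast lenL.symm k) with hf
  have finj : Function.Injective f := by
    intro k1 k2 h
    have h2 := (nd.get_inj_iff).mp h
    have h3 : (k1 : ℕ) = (k2 : ℕ) := by simpa using congrArg Fin.val h2
    exact Fin.ext h3
  set e : Equiv.Perm (Fin (n + 1)) :=
    Equiv.ofBijective f (Finite.injective_iff_bijective.mp finj) with he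
  refine ⟨e.symm, ⟨?_, ?_⟩, ?_⟩
  · -- the counting formula
    intro i
    have key : ∀ t : ℕ, ∀ ht : t < n + 1, L[t]? = some i →
        ((Equiv.symm e) i : ℕ) = t := by
      intro t ht hkey
      have hlt : t < L.length := by omega
      have hft : f ⟨t, ht⟩ = i := by
        have h4 : L[t]? = some (L[t]'hlt) := List.getElem?_eq_getElem hlt
        exact Option.some.inj (h4.symm.trans hkey)
      have h5 : e.symm i = ⟨t, ht⟩ := by
        rw [Equiv.symm_apply_eq]
        exact hft.symm
      rw [h5]
    have hpw1 : l1.Pairwise (· < ·) := (List.pairwise_lt_finRange _).filter _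
    have hpw2 : l2.Pairwise (· < ·) := (List.pairwise_lt_finRange _).filter _
    by_cases hi : r i ≠ c
    · rw [if_pos hi]
      set cgt := (Finset.univ.filter fun j : Fin (n+1) => i < j ∧ r j ≠ c).card with hcgt
      set clt := (Finset.univ.filter fun j : Fin (n+1) => j < i ∧ r j ≠ c).card with hclt
      have split := card_split (fun j => r j ≠ c) i hi
      beta_reduce at split
      rw [← hcgt, ← hclt, ← len1] at split
      have hmem : i ∈ l1 := by
        rw [hl1, List.mem_filter]
        exact ⟨List.mem_finRange i, by simpa using hi⟩
      have hcount : l1.countP (fun j => decide (j < i)) = clt := by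
        rw [hl1, List.countP_filter, hclt, card_eq_countP]
        refine List.countP_congr fun j _ => ?_
        by_cases h : j < i <;> by_cases h2 : r j = c <;> simp [h, h2]
      have hget := countP_get l1 hpw1 i hmem
      rw [hcount] at hget
      have hlt : cgt < l1.length := by omega
      refine key cgt (by omega) ?_
      rw [hL, List.getElem?_append_left (by simpa using hlt),
        List.getElem?_eq_getElem (by simpa using hlt), List.getElem_reverse]
      rw [← List.getElem?_eq_getElem (show l1.length - 1 - cgt < l1.length by omega)]
      rw [show l1.length - 1 - cgt = clt by omega]
      exact hget
    · rw [if_neg hi]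
      push_neg at hi
      set cgt := (Finset.univ.filter fun j : Fin (n+1) => i < j ∧ r j = c).card with hcgt
      set clt := (Finset.univ.filter fun j : Fin (n+1) => j < i ∧ r j = c).card with hclt
      have split := card_split (fun j => r j = c) i hi
      beta_reduce at split
      rw [← hcgt, ← hclt, ← len2] at split
      have hmem : i ∈ l2 := by
        rw [hl2, List.mem_filter]
        exact ⟨List.mem_finRange i, by simpa using hi⟩
      have hcount : l2.countP (fun j => decide (j < i)) = clt := by
        rw [hl2, List.countP_filter, hclt, card_eq_countP]
        refine List.countP_congr fun j _ => ?_
        by_cases h : j < i <;> by_cases h2 : r j = c <;> simp [h, h2]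
      have hget := countP_get l2 hpw2 i hmem
      rw [hcount] at hget
      refine key (n - clt) (by omega) ?_
      have hge : l1.reverse.length ≤ n - clt := by
        simp only [List.length_reverse]; omega
      rw [hL, List.getElem?_append_right hge]
      have hidxlt : n - clt - l1.reverse.length < l2.reverse.length := by
        simp only [List.length_reverse]; omega
      rw [List.getElem?_eq_getElem hidxlt, List.getElem_reverse]
      rw [← List.getElem?_eq_getElem
        (show l2.length - 1 - (n - clt - l1.reverse.length) < l2.length by
          simp only [List.length_reverse]; omega)]
      rw [show l2.length - 1 - (n - clt - l1.reverse.length) = clt by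
        simp only [List.length_reverse]; omega]
      exact hget
  · -- the list description of the inverse
    intro i
    have hi : (i : ℕ) < L.length := by rw [lenL]; exact i.isLt
    rw [List.getElem?_eq_getElem hi]
    rfl
  · -- uniqueness
    rintro b ⟨-, hb2⟩
    have hsymm : b.symm = e := by
      apply Equiv.ext
      intro i
      have h1 := hb2 i
      have hi : (i : ℕ) < L.length := by rw [lenL]; exact i.isLt
      have h2 : L[(i : ℕ)]? = some (e i) := by
        rw [List.getElem?_eq_getElem hi]
        rfl
      exact Option.some.inj (h1.symm.trans h2)
    have h3 := congrArg Equiv.symm hsymm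
    rwa [Equiv.symm_symm] at h3
end

section
/- In the harmonious Hilbert curve permutation function, deleting a coordinate is compatible with the permutations: let r be a d-bit number, let i be an index such that r with bit i deleted is r', and suppose the last bit of r' equals the last bit of r (i.e. r'_{d-2} = r_{d-1}). Then take_i(a(r)) = a'(r'), where a and a' are the harmonious Hilbert permutations in dimensions d and d-1 respectively, and take_i applied to a permutation removes the entry a_i and renumbers the remaining values consecutively. -/
theorem Fin.val_eq_ite_succAbove {n : ℕ} (p : Fin (n + 1)) (k : Fin n) :
    (k : ℕ) = if (p.succAbove k : ℕ) < (p : ℕ) then (p.succAbove k : ℕ)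
      else (p.succAbove k : ℕ) - 1 := by
  rcases Fin.castSucc_lt_or_lt_succ p k with h | h
  · rw [Fin.succAbove_of_castSucc_lt _ _ h, if_pos (Fin.lt_def.1 h), Fin.val_castSucc]
  · have hk : ¬ (k : ℕ) + 1 < p := by
      rw [Fin.lt_def, Fin.val_succ] at h
      omega
    rw [Fin.succAbove_of_lt_succ _ _ h, Fin.val_succ, if_neg hk, Nat.add_sub_cancel]

namespace List

theorem eq_ofFn_of_getElem? {α : Type*} {m : ℕ} {l : List α} {f : Fin m → α}
    (hl : l.length = m) (h : ∀ j : Fin m, l[(j : ℕ)]? = some (f j)) : l = ofFn f := by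
  refine ext_getElem? fun k => ?_
  by_cases hk : k < m
  · simp [h ⟨k, hk⟩, hk]
  · rw [getElem?_eq_none (by omega), getElem?_eq_none (by rw [length_ofFn]; omega)]

theorem ofFn_comp_succAbove {α : Type*} {n : ℕ} (f : Fin (n + 1) → α) (k : Fin (n + 1)) :
    ofFn (f ∘ k.succAbove) = (ofFn f).eraseIdx k := by
  refine ext_getElem (by simp [length_eraseIdx, k.is_le]) fun m h₁ _ => ?_
  rw [length_ofFn] at h₁
  simp only [List.getElem_ofFn, getElem_eraseIdx, Function.comp_apply]
  split_ifs with hm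
  · rw [Fin.succAbove_of_castSucc_lt _ _ (show Fin.castSucc ⟨m, h₁⟩ < k from hm)]
    rfl
  · rw [Fin.succAbove_of_le_castSucc _ _ (show k ≤ Fin.castSucc ⟨m, h₁⟩ from not_lt.1 hm)]
    rfl

theorem ofFn_erase_apply {α : Type*} [DecidableEq α] {n : ℕ} {f : Fin (n + 1) → α}
    (hf : Function.Injective f) (k : Fin (n + 1)) :
    (ofFn f).erase (f k) = ofFn (f ∘ k.succAbove) := by
  rw [ofFn_comp_succAbove, ← (nodup_ofFn.2 hf).erase_getElem k (by simpa using k.is_lt),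
    List.getElem_ofFn, Fin.eta]

theorem map_succAbove_finRange {n : ℕ} (i : Fin (n + 1)) :
    (finRange n).map i.succAbove = (finRange (n + 1)).erase i := by
  simpa [← ofFn_id, map_ofFn] using (ofFn_erase_apply Function.injective_id i).symm

end List

theorem harmoniousInvList_perm (n : ℕ) (r : Fin (n + 1) → Fin 2) :
    (harmoniousInvList n r).Perm (List.finRange (n + 1)) := by
  refine ((List.reverse_perm _).append (List.reverse_perm _)).trans ?_
  simpa [decide_not] using
    List.filter_append_perm (fun h => !decide (r h = r (Fin.last n))) (List.finRange (n + 1))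

theorem harmoniousInvList_length (n : ℕ) (r : Fin (n + 1) → Fin 2) :
    (harmoniousInvList n r).length = n + 1 :=
  (harmoniousInvList_perm n r).length_eq.trans (List.length_finRange)

theorem harmoniousInvList_erase {n : ℕ} {r : Fin (n + 2) → Fin 2} {i : Fin (n + 2)}
    (hlast : r (i.succAbove (Fin.last n)) = r (Fin.last (n + 1))) :
    (harmoniousInvList (n + 1) r).erase i
      = (harmoniousInvList n (fun t => r (i.succAbove t))).map i.succAbove := by
  have hnd := (harmoniousInvList_perm (n + 1) r).nodup_iff.2 (List.nodup_finRange _)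
  rw [hnd.erase_eq_filter, harmoniousInvList, harmoniousInvList, List.filter_append,
    List.filter_reverse, List.filter_reverse, List.filter_comm (fun x => x != i),
    List.filter_comm (fun x => x != i), ← (List.nodup_finRange _).erase_eq_filter,
    ← List.map_succAbove_finRange, List.filter_map, List.filter_map]
  simp only [List.map_append, List.map_reverse, Function.comp_def, hlast]

/-- Deleting a coordinate is compatible with the harmonious Hilbert permutations.
Let `r` be a `d`-bit string (`d = n + 2`), let `i` be an index, and let
`r' = take_i(r)` be `r` with bit `i` deleted (so `r' j = r (i.succAbove j)`).  Suppose
the last bit of `r'` equals the last bit of `r`.  Let `a` and `a'` be the harmonious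
Hilbert permutations of `r` and `r'` in dimensions `d` and `d - 1` (characterized by
their inverses, as sequences obtained from the identity by moving the indices `h` with
`r_h ≠ r_{d-1}` to the front reversed and reversing the remaining indices as well).
Then `take_i(a(r)) = a'(r')`: deleting entry `a_i` from the value sequence of `a` and
decreasing by one every remaining entry exceeding `a_i` yields exactly `a'`. -/
theorem harmonious_permutation_take_coordinate
    (n : ℕ) (r : Fin (n + 2) → Fin 2) (i : Fin (n + 2))
    (a : Equiv.Perm (Fin (n + 2))) (a' : Equiv.Perm (Fin (n + 1)))
    (hlast : r (i.succAbove (Fin.last n)) = r (Fin.last (n + 1)))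
    (ha : ∀ j : Fin (n + 2),
      (harmoniousInvList (n + 1) r)[(j : ℕ)]? = some (a.symm j))
    (ha' : ∀ j : Fin (n + 1),
      (harmoniousInvList n (fun t => r (i.succAbove t)))[(j : ℕ)]? = some (a'.symm j)) :
    ∀ j : Fin (n + 1), (a' j : ℕ) =
      if (a (i.succAbove j) : ℕ) < (a i : ℕ)
      then (a (i.succAbove j) : ℕ)
      else (a (i.succAbove j) : ℕ) - 1 := by
  intro j
  have hL := List.eq_ofFn_of_getElem? (harmoniousInvList_length _ _) ha
  have hL' := List.eq_ofFn_of_getElem? (harmoniousInvList_length _ _) ha'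
  have hcomm : a.symm ∘ (a i).succAbove = i.succAbove ∘ a'.symm := by
    rw [← List.ofFn_inj, ← List.map_ofFn (f := a'.symm), ← hL',
      ← harmoniousInvList_erase hlast, hL, ← List.ofFn_erase_apply a.symm.injective,
      Equiv.symm_apply_apply]
  have hj : a (i.succAbove j) = (a i).succAbove (a' j) := by
    have h := congrFun hcomm (a' j)
    rw [Function.comp_apply, Function.comp_apply, Equiv.symm_apply_apply] at h
    rw [← h, Equiv.apply_symm_apply]
  rw [hj]
  exact Fin.val_eq_ite_succAbove (a i) (a' j)
end

section
/- For d >= 2, every permutation in S_d can be written as a composition of exactly 2d(d-1) permutations each of which is of one of the forms: (i) the permutation obtained by swapping the first two elements and then reversing the whole sequence, (ii) for some 1 <= k <= d, the permutation obtained by cyclically rotating the sequence k steps to the right and then reversing the whole sequence, or (iii) the full reversal permutation. -/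
/-!
Bubble sort writes a permutation of `Fin d` as a product of exactly as many adjacent
transpositions as it has inversions, and there are at most `d(d-1)/2` inversions. With
`ρ = finRotate d` and `r = Fin.revPerm`, conjugating `swap 0 1` by `r` gives `swap (d-1) (d-2)`,
and conjugating that by `ρ ^ (i+2)` gives `swap i (i+1)`; since `r * r = 1` this reads
`swap i (i+1) = (ρ^(i+2) r) (swap 0 1 r) (ρ^(-(i+2)) r) r`, a product of four generators, because
every power of `ρ` is a power `(ρ⁻¹)^k` with `1 ≤ k ≤ d`. This gives at most `2d(d-1)`
generators, an even number, and the remaining slots are filled with copies of `r * r = 1`.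
-/

open Equiv Finset

section Words

variable {M : Type*} [Monoid M]

def IsProdOfLength (S : Set M) (m : ℕ) (g : M) : Prop :=
  ∃ L : List M, L.length = m ∧ (∀ x ∈ L, x ∈ S) ∧ L.prod = g

variable {S T : Set M} {m k : ℕ} {g h : M}

theorem isProdOfLength_zero_one : IsProdOfLength S 0 1 := ⟨[], rfl, by simp, rfl⟩

theorem isProdOfLength_one_of_mem (hg : g ∈ S) : IsProdOfLength S 1 g :=
  ⟨[g], rfl, by simpa using hg, by simp⟩

theorem IsProdOfLength.mul (hg : IsProdOfLength S m g) (hh : IsProdOfLength S k h) :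
    IsProdOfLength S (m + k) (g * h) := by
  obtain ⟨L, rfl, hL, rfl⟩ := hg
  obtain ⟨L', rfl, hL', rfl⟩ := hh
  exact ⟨L ++ L', List.length_append, by simpa using fun x hx => hx.elim (hL x) (hL' x),
    List.prod_append⟩

theorem IsProdOfLength.of_forall_mem (hg : IsProdOfLength S m g)
    (hST : ∀ s ∈ S, IsProdOfLength T k s) : IsProdOfLength T (k * m) g := by
  obtain ⟨L, rfl, hL, rfl⟩ := hg
  induction L with
  | nil => exact isProdOfLength_zero_one
  | cons s L ih =>
    simp only [List.mem_cons, forall_eq_or_imp] at hL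
    simpa [mul_add, add_comm] using (hST s hL.1).mul (ih hL.2)

theorem IsProdOfLength.add_two_mul {r : M} (hg : IsProdOfLength T m g) (hr : r ∈ T)
    (hrr : r * r = 1) (j : ℕ) : IsProdOfLength T (m + 2 * j) g := by
  induction j with
  | zero => exact hg
  | succ j ih =>
    simpa [hrr, mul_assoc, ← add_assoc, mul_add] using
      ih.mul ((isProdOfLength_one_of_mem hr).mul (isProdOfLength_one_of_mem hr))

end Words

namespace Equiv.Perm

variable {d n : ℕ}

def inversions (σ : Perm (Fin d)) : Finset (Fin d × Fin d) :=
  {p | p.1 < p.2 ∧ σ p.2 < σ p.1}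

@[simp]
theorem mem_inversions {σ : Perm (Fin d)} {p : Fin d × Fin d} :
    p ∈ inversions σ ↔ p.1 < p.2 ∧ σ p.2 < σ p.1 := by
  simp [inversions]

theorem two_mul_card_inversions_le (σ : Perm (Fin d)) :
    2 * #(inversions σ) ≤ d * (d - 1) := by
  let e := (Equiv.prodComm (Fin d) (Fin d)).toEmbedding
  have hdisj : _root_.Disjoint (inversions σ) ((inversions σ).map e) := by
    rw [Finset.disjoint_left]
    rintro ⟨a, b⟩ hp hq
    rw [mem_map_equiv] at hq
    exact lt_asymm (mem_inversions.1 hp).1 (mem_inversions.1 hq).1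
  have hsub : inversions σ ∪ (inversions σ).map e ⊆ (univ : Finset (Fin d)).offDiag := by
    rintro ⟨a, b⟩ hp
    rw [mem_union, mem_map_equiv] at hp
    refine mem_offDiag.2 ⟨mem_univ _, mem_univ _, ?_⟩
    rcases hp with hp | hp
    exacts [(mem_inversions.1 hp).1.ne, (mem_inversions.1 hp).1.ne']
  calc 2 * #(inversions σ) = #(inversions σ ∪ (inversions σ).map e) := by
        rw [card_union_of_disjoint hdisj, card_map, two_mul]
    _ ≤ #(univ : Finset (Fin d)).offDiag := card_le_card hsub
    _ = d * (d - 1) := by simp [offDiag_card, Nat.mul_sub_one]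

theorem exists_succ_lt_castSucc_of_ne_one {σ : Perm (Fin (n + 1))} (hσ : σ ≠ 1) :
    ∃ i : Fin n, σ i.succ < σ i.castSucc := by
  contrapose! hσ
  have hmono : StrictMono σ := Fin.strictMono_iff_lt_succ.2 fun i =>
    (hσ i).lt_of_ne (σ.injective.ne Fin.castSucc_lt_succ.ne)
  exact Equiv.ext (congrFun hmono.eq_id)

theorem swap_castSucc_succ_lt_swap_castSucc_succ_iff {i : Fin n} {x y : Fin (n + 1)}
    (hxy : ¬(x = i.castSucc ∧ y = i.succ)) (hyx : ¬(x = i.succ ∧ y = i.castSucc)) :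
    swap i.castSucc i.succ x < swap i.castSucc i.succ y ↔ x < y := by
  rw [swap_apply_def, swap_apply_def]
  split_ifs <;> simp only [Fin.lt_def, Fin.ext_iff, Fin.val_castSucc, Fin.val_succ] at * <;> omega

theorem inversions_mul_swap {σ : Perm (Fin (n + 1))} {i : Fin n}
    (hi : σ i.succ < σ i.castSucc) :
    inversions (σ * swap i.castSucc i.succ) =
      ((inversions σ).erase (i.castSucc, i.succ)).map
        ((swap i.castSucc i.succ).prodCongr (swap i.castSucc i.succ)).toEmbedding := by
  ext ⟨x, y⟩
  simp only [mem_inversions, mem_map_equiv, mem_erase, Ne,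
    Prod.ext_iff, prodCongr_symm, symm_swap, prodCongr_apply, Prod.map, mul_apply]
  by_cases hxy : x = i.castSucc ∧ y = i.succ
  · obtain ⟨rfl, rfl⟩ := hxy
    simp [hi.not_gt]
  by_cases hyx : x = i.succ ∧ y = i.castSucc
  · obtain ⟨rfl, rfl⟩ := hyx
    simp [Fin.castSucc_lt_succ.not_gt]
  rw [swap_castSucc_succ_lt_swap_castSucc_succ_iff hxy hyx]
  simp [swap_apply_eq_iff, hyx]

theorem card_inversions_mul_swap {σ : Perm (Fin (n + 1))} {i : Fin n}
    (hi : σ i.succ < σ i.castSucc) :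
    #(inversions (σ * swap i.castSucc i.succ)) + 1 = #(inversions σ) := by
  rw [inversions_mul_swap hi, card_map, card_erase_add_one]
  exact mem_inversions.2 ⟨Fin.castSucc_lt_succ, hi⟩

theorem isProdOfLength_card_inversions (σ : Perm (Fin (n + 1))) :
    IsProdOfLength (Set.range fun i : Fin n ↦ swap i.castSucc i.succ) #(inversions σ) σ := by
  obtain rfl | hσ := eq_or_ne σ 1
  · have hempty : inversions (1 : Perm (Fin (n + 1))) = ∅ := by
      ext p
      simpa using @lt_asymm _ _ p.1 p.2
    rw [hempty]
    exact isProdOfLength_zero_one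
  obtain ⟨i, hi⟩ := exists_succ_lt_castSucc_of_ne_one hσ
  have hcard := card_inversions_mul_swap hi
  have ih := isProdOfLength_card_inversions (σ * swap i.castSucc i.succ)
  rw [← hcard]
  simpa [mul_assoc] using ih.mul (isProdOfLength_one_of_mem ⟨i, rfl⟩)
termination_by #(inversions σ)
decreasing_by omega

end Equiv.Perm

section Harmonious

variable {n : ℕ}

def harmoniousGenerators (n : ℕ) : Set (Perm (Fin (n + 2))) :=
  {x | x = swap 0 1 * Fin.revPerm ∨
    (∃ k : ℕ, 1 ≤ k ∧ k ≤ n + 2 ∧ x = ((finRotate (n + 2))⁻¹) ^ k * Fin.revPerm) ∨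
    x = Fin.revPerm}

theorem val_finRotate_pow_apply (k : ℕ) (x : Fin (n + 1)) :
    ((finRotate (n + 1) ^ k) x : ℕ) = (x + k) % (n + 1) := by
  induction k with
  | zero => simp [Nat.mod_eq_of_lt x.isLt]
  | succ k ih =>
    rw [pow_succ', Perm.mul_apply, finRotate_apply, Fin.val_add, ih, Fin.val_one', Nat.mod_add_mod,
      Nat.add_mod_mod, add_assoc]

theorem finRotate_pow_self : finRotate (n + 1) ^ (n + 1) = 1 := by
  ext x
  simp [val_finRotate_pow_apply, Nat.mod_eq_of_lt x.isLt]

theorem exists_pow_eq_zpow {G : Type*} [Group G] {g : G} {d : ℕ} (hd : 0 < d) (hg : g ^ d = 1)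
    (z : ℤ) : ∃ k : ℕ, 1 ≤ k ∧ k ≤ d ∧ g ^ k = g ^ z := by
  have h0 := Int.emod_nonneg (z - 1) (by omega : (d : ℤ) ≠ 0)
  have h1 := Int.emod_lt_of_pos (z - 1) (by omega : (0 : ℤ) < d)
  refine ⟨((z - 1) % d).toNat + 1, by omega, by omega, ?_⟩
  rw [← zpow_natCast, Nat.cast_add, Nat.cast_one, Int.toNat_of_nonneg h0, zpow_add_one,
    ← zpow_eq_zpow_emod' _ hg, ← zpow_add_one, sub_add_cancel]

theorem finRotate_zpow_mul_revPerm_mem (z : ℤ) :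
    finRotate (n + 2) ^ z * Fin.revPerm ∈ harmoniousGenerators n := by
  have hρ : (finRotate (n + 2))⁻¹ ^ (n + 2) = 1 := by rw [inv_pow, finRotate_pow_self, inv_one]
  obtain ⟨k, hk1, hkd, hk⟩ := exists_pow_eq_zpow (by omega) hρ (-z)
  exact Or.inr (Or.inl ⟨k, hk1, hkd, by rw [hk, inv_zpow', neg_neg]⟩)

theorem revPerm_mul_self {d : ℕ} : (Fin.revPerm : Perm (Fin d)) * Fin.revPerm = 1 := by
  ext
  simp

theorem swap_castSucc_succ_eq (i : Fin (n + 1)) :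
    swap i.castSucc i.succ =
      (finRotate (n + 2) ^ ((i : ℤ) + 2) * Fin.revPerm) * (swap 0 1 * Fin.revPerm) *
        (finRotate (n + 2) ^ (-((i : ℤ) + 2)) * Fin.revPerm) * Fin.revPerm := by
  set ρ := finRotate (n + 2) ^ (i + 2 : ℕ)
  set r : Perm (Fin (n + 2)) := Fin.revPerm
  calc swap i.castSucc i.succ = swap (ρ (r 0)) (ρ (r 1)) := by
        rw [swap_comm]
        congr 1 <;> ext <;> simp only [ρ, r, val_finRotate_pow_apply, Fin.revPerm_apply, Fin.val_rev,
          Fin.val_zero, Fin.val_one, Fin.val_castSucc, Fin.val_succ]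
          <;> rw [Nat.mod_eq_sub_mod (by omega), Nat.mod_eq_of_lt (by omega)] <;> omega
    _ = ρ * (r * swap 0 1 * r⁻¹) * ρ⁻¹ := by rw [swap_apply_apply, swap_apply_apply]
    _ = _ := by
      have hr : r * r = 1 := revPerm_mul_self
      have hcast : ((i : ℕ) : ℤ) + 2 = ((i + 2 : ℕ) : ℤ) := by push_cast; rfl
      rw [inv_eq_of_mul_eq_one_right hr, zpow_neg, hcast, zpow_natCast]
      simp only [ρ, mul_assoc, hr, mul_one]

theorem isProdOfLength_four_swap_castSucc_succ (i : Fin (n + 1)) :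
    IsProdOfLength (harmoniousGenerators n) 4 (swap i.castSucc i.succ) := by
  rw [swap_castSucc_succ_eq]
  exact (((isProdOfLength_one_of_mem (finRotate_zpow_mul_revPerm_mem _)).mul
    (isProdOfLength_one_of_mem (Or.inl rfl))).mul
    (isProdOfLength_one_of_mem (finRotate_zpow_mul_revPerm_mem _))).mul
    (isProdOfLength_one_of_mem (Or.inr (Or.inr rfl)))

end Harmonious

/-- For `d ≥ 2` (here `d = n + 2`), every permutation in `S_d` can be written as a
composition of exactly `2d(d-1)` permutations, each of one of the following forms
(where a permutation `σ` is identified with the value sequence `(σ 0, ..., σ (d-1))`):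
(i) the permutation obtained by swapping the first two elements of the identity
sequence and then reversing the whole sequence, i.e. `Equiv.swap 0 1 * Fin.revPerm`;
(ii) for some `1 ≤ k ≤ d`, the permutation obtained by cyclically rotating the identity
sequence `k` steps to the right and then reversing the whole sequence, i.e.
`((finRotate d)⁻¹) ^ k * Fin.revPerm`; or (iii) the full reversal `Fin.revPerm`. -/
theorem harmonious_generators_compose (n : ℕ) :
    ∀ σ : Equiv.Perm (Fin (n + 2)),
      ∃ L : List (Equiv.Perm (Fin (n + 2))),
        L.length = 2 * (n + 2) * (n + 1) ∧
        (∀ x ∈ L,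
          x = Equiv.swap (0 : Fin (n + 2)) 1 * Fin.revPerm ∨
          (∃ k : ℕ, 1 ≤ k ∧ k ≤ n + 2 ∧
            x = ((finRotate (n + 2))⁻¹) ^ k * Fin.revPerm) ∨
          x = Fin.revPerm) ∧
        L.prod = σ := by
  intro σ
  have hσ : IsProdOfLength (harmoniousGenerators n) (4 * #σ.inversions) σ :=
    σ.isProdOfLength_card_inversions.of_forall_mem
      (by rintro _ ⟨i, rfl⟩; exact isProdOfLength_four_swap_castSucc_succ i)
  have hbound : 2 * #σ.inversions ≤ (n + 2) * (n + 1) := σ.two_mul_card_inversions_le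
  obtain ⟨L, hlen, hL, hprod⟩ := hσ.add_two_mul (Or.inr (Or.inr rfl)) revPerm_mul_self
    ((n + 2) * (n + 1) - 2 * #σ.inversions)
  refine ⟨L, ?_, hL, hprod⟩
  rw [hlen, mul_assoc]
  omega
end

section
/- The two-dimensional Hilbert curve admits a valid ordering h^{-1} of the unit square that is monotone along the bottom edge and along the ascending diagonal: h^{-1}((t,0)) is strictly increasing in t for t in [0,1], and h^{-1}((t,t)) is strictly increasing in t for t in [0,1]. -/
/-!
The bottom edge `(t, 0)`, the left edge `(0, t)`, the right edge `(1, 1 - t)` and the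
diagonal `(t, t)` are self-similar in the Hilbert subdivision: each half `t ≤ 1/2`,
`t > 1/2` of one of them is the image of one of these four segments under the similarity
carrying the square onto a quadrant (`Segment.step`). Reading `t` in binary therefore
produces a base-4 expansion `param s t` of a curve parameter, and since the quadrant maps
halve distances, the functional equations of `h` force `h (param s t) = point s t`.
At the first binary digit where `x < y` differ, `x` lies in a quadrant visited before
that of `y`, so `param s` is strictly increasing. On the rest of the square any right
inverse of `h` will do.
-/

open Set

noncomputable section

namespace HilbertCurve

def quadrant : Fin 4 → ℝ × ℝ → ℝ × ℝ
  | 0, p => (p.2 / 2, p.1 / 2)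
  | 1, p => (p.1 / 2, p.2 / 2 + 1 / 2)
  | 2, p => (p.1 / 2 + 1 / 2, p.2 / 2 + 1 / 2)
  | 3, p => ((1 - p.2) / 2 + 1 / 2, (1 - p.1) / 2)

theorem dist_quadrant_le (d : Fin 4) (p q : ℝ × ℝ) :
    dist (quadrant d p) (quadrant d q) ≤ dist p q / 2 := by
  simp only [Prod.dist_eq, Real.dist_eq]
  have h₁ := abs_le.mp (le_max_left |p.1 - q.1| |p.2 - q.2|)
  have h₂ := abs_le.mp (le_max_right |p.1 - q.1| |p.2 - q.2|)
  fin_cases d <;> refine max_le ?_ ?_ <;> simp only [quadrant, abs_le] <;> constructor <;> linarith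

theorem apply_add_div_four_eq_quadrant {h : ℝ → ℝ × ℝ}
    (e1 : ∀ t ∈ Icc (0 : ℝ) 1, h (t / 4) = ((h t).2 / 2, (h t).1 / 2))
    (e2 : ∀ t ∈ Icc (0 : ℝ) 1, h ((1 + t) / 4) = ((h t).1 / 2, (h t).2 / 2 + 1 / 2))
    (e3 : ∀ t ∈ Icc (0 : ℝ) 1, h ((2 + t) / 4) = ((h t).1 / 2 + 1 / 2, (h t).2 / 2 + 1 / 2))
    (e4 : ∀ t ∈ Icc (0 : ℝ) 1,
      h ((3 + t) / 4) = ((1 - (h t).2) / 2 + 1 / 2, (1 - (h t).1) / 2))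
    (d : Fin 4) : ∀ u ∈ Icc (0 : ℝ) 1, h ((d + u) / 4) = quadrant d (h u) := by
  fin_cases d
  · simpa [quadrant] using e1
  · simpa [quadrant] using e2
  · simpa [quadrant] using e3
  · simpa [quadrant] using e4

-- Binary digits of the non-terminating expansion, so that `1 = 0.111…` and `doubling`
-- maps `[0, 1]` to itself.
def upperHalf (t : ℝ) : Bool := decide (1 / 2 < t)

def doubling (t : ℝ) : ℝ := if 1 / 2 < t then 2 * t - 1 else 2 * t

theorem doubling_mem_Icc {t : ℝ} (ht : t ∈ Icc (0 : ℝ) 1) :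
    doubling t ∈ Icc (0 : ℝ) 1 := by
  unfold doubling
  split_ifs <;> constructor <;> linarith [ht.1, ht.2]

inductive Segment
  | bottom
  | left
  | right
  | diagonal

namespace Segment

def point : Segment → ℝ → ℝ × ℝ
  | bottom, t => (t, 0)
  | left, t => (0, t)
  | right, t => (1, 1 - t)
  | diagonal, t => (t, t)

def step : Segment → Bool → Fin 4 × Segment
  | bottom, false => (0, left)
  | bottom, true => (3, right)
  | left, false => (0, bottom)
  | left, true => (1, left)
  | right, false => (2, right)
  | right, true => (3, bottom)
  | diagonal, false => (0, diagonal)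
  | diagonal, true => (2, diagonal)

theorem point_eq_quadrant_step (s : Segment) (t : ℝ) :
    s.point t =
      quadrant (s.step (upperHalf t)).1 ((s.step (upperHalf t)).2.point (doubling t)) := by
  unfold upperHalf doubling
  split_ifs with ht <;> cases s <;>
    · simp only [ht, decide_true, decide_false, step, point, quadrant]
      ext <;> ring

theorem step_false_add_one_le_step_true (s : Segment) :
    ((s.step false).1 : ℝ) + 1 ≤ (s.step true).1 := by
  cases s <;> norm_num [step]

theorem step_true_pos (s : Segment) : (0 : ℝ) < (s.step true).1 := by
  cases s <;> norm_num [step]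

def digits : Segment → ℝ → ℕ → Fin 4
  | s, t, 0 => (s.step (upperHalf t)).1
  | s, t, n + 1 => digits (s.step (upperHalf t)).2 (doubling t) n

def param (s : Segment) (t : ℝ) : ℝ := Real.ofDigits (s.digits t)

theorem param_mem_Icc (s : Segment) (t : ℝ) : s.param t ∈ Icc (0 : ℝ) 1 :=
  ⟨Real.ofDigits_nonneg _, Real.ofDigits_le_one _⟩

theorem param_eq (s : Segment) (t : ℝ) :
    s.param t = ((s.step (upperHalf t)).1 + (s.step (upperHalf t)).2.param (doubling t)) / 4 := by
  rw [param, Real.ofDigits_eq_sum_add_ofDigits _ 1]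
  simp only [Finset.range_one, Finset.sum_singleton, Real.ofDigitsTerm, digits, param, pow_one,
    zero_add, Nat.cast_ofNat]
  ring

theorem param_of_le_half (s : Segment) {t : ℝ} (ht : t ≤ 1 / 2) :
    s.param t = ((s.step false).1 + (s.step false).2.param (2 * t)) / 4 := by
  rw [param_eq, upperHalf, doubling, if_neg ht.not_gt, decide_eq_false ht.not_gt]

theorem param_of_half_lt (s : Segment) {t : ℝ} (ht : 1 / 2 < t) :
    s.param t = ((s.step true).1 + (s.step true).2.param (2 * t - 1)) / 4 := by
  rw [param_eq, upperHalf, doubling, if_pos ht, decide_eq_true ht]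

theorem param_pos_of_half_pow_lt (n : ℕ) :
    ∀ (s : Segment) {t : ℝ}, t ≤ 1 → (1 / 2) ^ n < t → 0 < s.param t := by
  induction n with
  | zero => intro s t ht hn; rw [pow_zero] at hn; linarith
  | succ n ih =>
    intro s t ht hn
    rcases le_or_gt t (1 / 2) with ht' | ht'
    · rw [param_of_le_half s ht']
      have := ih (s.step false).2 (t := 2 * t) (by linarith) (by rw [pow_succ] at hn; linarith)
      linarith [Nat.cast_nonneg (α := ℝ) (s.step false).1]
    · rw [param_of_half_lt s ht']
      linarith [step_true_pos s, (param_mem_Icc (s.step true).2 (2 * t - 1)).1]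

theorem param_pos (s : Segment) {t : ℝ} (ht₀ : 0 < t) (ht₁ : t ≤ 1) : 0 < s.param t := by
  obtain ⟨n, hn⟩ := exists_pow_lt_of_lt_one ht₀ one_half_lt_one
  exact param_pos_of_half_pow_lt n s ht₁ hn

theorem param_lt_param_of_half_pow_lt (n : ℕ) :
    ∀ (s : Segment) {x y : ℝ}, 0 ≤ x → y ≤ 1 → (1 / 2) ^ n < y - x →
      s.param x < s.param y := by
  induction n with
  | zero => intro s x y hx hy hn; rw [pow_zero] at hn; linarith
  | succ n ih =>
    intro s x y hx hy hn
    have hxy : 0 < y - x := (by positivity : (0 : ℝ) < (1 / 2) ^ (n + 1)).trans hn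
    rw [pow_succ] at hn
    rcases le_or_gt y (1 / 2) with hy' | hy'
    · rw [param_of_le_half s (by linarith), param_of_le_half s hy']
      have := ih (s.step false).2 (x := 2 * x) (y := 2 * y) (by linarith) (by linarith)
        (by linarith)
      linarith
    rcases le_or_gt x (1 / 2) with hx' | hx'
    · rw [param_of_le_half s hx', param_of_half_lt s hy']
      linarith [step_false_add_one_le_step_true s, (param_mem_Icc (s.step false).2 (2 * x)).2,
        param_pos (s.step true).2 (t := 2 * y - 1) (by linarith) (by linarith)]
    · rw [param_of_half_lt s hx', param_of_half_lt s hy']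
      have := ih (s.step true).2 (x := 2 * x - 1) (y := 2 * y - 1) (by linarith) (by linarith)
        (by linarith)
      linarith

theorem strictMonoOn_param (s : Segment) : StrictMonoOn s.param (Icc 0 1) := by
  intro x hx y hy hxy
  obtain ⟨n, hn⟩ := exists_pow_lt_of_lt_one (sub_pos.mpr hxy) one_half_lt_one
  exact param_lt_param_of_half_pow_lt n s hx.1 hy.2 hn

theorem param_bottom_zero : bottom.param 0 = 0 := by
  have hb := param_of_le_half bottom (t := 0) (by norm_num)
  have hl := param_of_le_half left (t := 0) (by norm_num)
  simp only [step, mul_zero, Fin.val_zero, Nat.cast_zero, zero_add] at hb hl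
  linarith

theorem param_diagonal_zero : diagonal.param 0 = 0 := by
  have hd := param_of_le_half diagonal (t := 0) (by norm_num)
  simp only [step, mul_zero, Fin.val_zero, Nat.cast_zero, zero_add] at hd
  linarith

theorem point_mem (s : Segment) {t : ℝ} (ht : t ∈ Icc (0 : ℝ) 1) :
    s.point t ∈ Icc (0 : ℝ) 1 ×ˢ Icc (0 : ℝ) 1 := by
  obtain ⟨h₀, h₁⟩ := ht
  cases s <;> simp only [point, mem_prod, mem_Icc] <;>
    refine ⟨⟨?_, ?_⟩, ?_, ?_⟩ <;> linarith

variable {h : ℝ → ℝ × ℝ}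
  (hmaps : MapsTo h (Icc 0 1) (Icc (0 : ℝ) 1 ×ˢ Icc (0 : ℝ) 1))
  (hquad : ∀ (d : Fin 4), ∀ u ∈ Icc (0 : ℝ) 1, h ((d + u) / 4) = quadrant d (h u))
include hmaps hquad

theorem dist_apply_param_point_le (n : ℕ) :
    ∀ (s : Segment) {t : ℝ}, t ∈ Icc (0 : ℝ) 1 →
      dist (h (s.param t)) (s.point t) ≤ (1 / 2) ^ n := by
  induction n with
  | zero =>
    intro s t ht
    have hp := hmaps (param_mem_Icc s t)
    have hq := point_mem s ht
    simp only [mem_prod, mem_Icc] at hp hq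
    simp only [pow_zero, Prod.dist_eq, Real.dist_eq]
    refine max_le ?_ ?_ <;> rw [abs_le] <;> constructor <;> linarith
  | succ n ih =>
    intro s t ht
    rw [param_eq, hquad _ _ (param_mem_Icc _ _), point_eq_quadrant_step, pow_succ]
    calc _ ≤ _ := dist_quadrant_le _ _ _
      _ ≤ (1 / 2) ^ n / 2 := by gcongr; exact ih _ (doubling_mem_Icc ht)
      _ = _ := by ring

theorem apply_param (s : Segment) {t : ℝ} (ht : t ∈ Icc (0 : ℝ) 1) :
    h (s.param t) = s.point t := by
  refine dist_le_zero.mp (le_of_forall_pos_le_add fun ε hε ↦ ?_)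
  obtain ⟨n, hn⟩ := exists_pow_lt_of_lt_one hε one_half_lt_one
  linarith [dist_apply_param_point_le hmaps hquad n s ht]

end Segment

end HilbertCurve

end

open HilbertCurve Segment

theorem hilbert_curve_monotone_bottom_edge_and_diagonal_general
    (h : ℝ → ℝ × ℝ)
    (hmaps : Set.MapsTo h (Set.Icc 0 1) (Set.Icc (0 : ℝ) 1 ×ˢ Set.Icc (0 : ℝ) 1))
    (hsurj : Set.SurjOn h (Set.Icc 0 1) (Set.Icc (0 : ℝ) 1 ×ˢ Set.Icc (0 : ℝ) 1))
    (e1 : ∀ t ∈ Set.Icc (0 : ℝ) 1, h (t / 4) = ((h t).2 / 2, (h t).1 / 2))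
    (e2 : ∀ t ∈ Set.Icc (0 : ℝ) 1, h ((1 + t) / 4) = ((h t).1 / 2, (h t).2 / 2 + 1 / 2))
    (e3 : ∀ t ∈ Set.Icc (0 : ℝ) 1,
      h ((2 + t) / 4) = ((h t).1 / 2 + 1 / 2, (h t).2 / 2 + 1 / 2))
    (e4 : ∀ t ∈ Set.Icc (0 : ℝ) 1,
      h ((3 + t) / 4) = ((1 - (h t).2) / 2 + 1 / 2, (1 - (h t).1) / 2)) :
    ∃ hinv : ℝ × ℝ → ℝ,
      (∀ p ∈ Set.Icc (0 : ℝ) 1 ×ˢ Set.Icc (0 : ℝ) 1,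
        hinv p ∈ Set.Icc (0 : ℝ) 1 ∧ h (hinv p) = p) ∧
      StrictMonoOn (fun t : ℝ => hinv (t, 0)) (Set.Icc 0 1) ∧
      StrictMonoOn (fun t : ℝ => hinv (t, t)) (Set.Icc 0 1) := by
  have hquad := apply_add_div_four_eq_quadrant e1 e2 e3 e4
  refine ⟨fun p ↦ if p.2 = 0 then bottom.param p.1 else if p.1 = p.2 then diagonal.param p.1
    else Function.invFunOn h (Icc 0 1) p, ?_, ?_, ?_⟩
  · rintro ⟨x, y⟩ hp
    obtain ⟨hx, -⟩ := mem_prod.mp hp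
    dsimp only
    split_ifs with hy hxy
    · subst hy
      exact ⟨param_mem_Icc _ _, apply_param hmaps hquad bottom hx⟩
    · subst hxy
      exact ⟨param_mem_Icc _ _, apply_param hmaps hquad diagonal hx⟩
    · exact Function.invFunOn_pos (hsurj hp)
  · simpa using strictMonoOn_param bottom
  · refine (strictMonoOn_param diagonal).congr fun t _ ↦ ?_
    by_cases ht : t = 0 <;> simp [ht, param_bottom_zero, param_diagonal_zero]

/-- The two-dimensional Hilbert curve `h : [0,1] → [0,1]²` is the 2-regular
space-filling curve determined by subdividing the unit square into four quadrants
visited in the order lower-left, upper-left, upper-right, lower-right, where the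
sub-curve in the first quadrant is the whole curve reflected in the diagonal `y = x`
(and scaled), the middle two quadrants carry translated scaled copies, and the last
quadrant carries the curve reflected in the anti-diagonal (the reflection
`(x, y) ↦ (1 - y, 1 - x)`), scaled and translated into place.  These conditions are
expressed by the functional equations `e1`–`e4` below.

The Hilbert curve admits a valid ordering `hinv` of the unit square (a right inverse
of `h` on `[0,1]²`) that is monotone along the bottom edge and along the ascending
diagonal: `hinv (t, 0)` is strictly increasing in `t ∈ [0,1]`, and `hinv (t, t)` is
strictly increasing in `t ∈ [0,1]`. -/
theorem hilbert_curve_monotone_bottom_edge_and_diagonal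
    (h : ℝ → ℝ × ℝ)
    (hcont : ContinuousOn h (Set.Icc 0 1))
    (hmaps : Set.MapsTo h (Set.Icc 0 1) (Set.Icc (0 : ℝ) 1 ×ˢ Set.Icc (0 : ℝ) 1))
    (hsurj : Set.SurjOn h (Set.Icc 0 1) (Set.Icc (0 : ℝ) 1 ×ˢ Set.Icc (0 : ℝ) 1))
    (e1 : ∀ t ∈ Set.Icc (0 : ℝ) 1, h (t / 4) = ((h t).2 / 2, (h t).1 / 2))
    (e2 : ∀ t ∈ Set.Icc (0 : ℝ) 1, h ((1 + t) / 4) = ((h t).1 / 2, (h t).2 / 2 + 1 / 2))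
    (e3 : ∀ t ∈ Set.Icc (0 : ℝ) 1,
      h ((2 + t) / 4) = ((h t).1 / 2 + 1 / 2, (h t).2 / 2 + 1 / 2))
    (e4 : ∀ t ∈ Set.Icc (0 : ℝ) 1,
      h ((3 + t) / 4) = ((1 - (h t).2) / 2 + 1 / 2, (1 - (h t).1) / 2)) :
    ∃ hinv : ℝ × ℝ → ℝ,
      (∀ p ∈ Set.Icc (0 : ℝ) 1 ×ˢ Set.Icc (0 : ℝ) 1,
        hinv p ∈ Set.Icc (0 : ℝ) 1 ∧ h (hinv p) = p) ∧
      StrictMonoOn (fun t : ℝ => hinv (t, 0)) (Set.Icc 0 1) ∧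
      StrictMonoOn (fun t : ℝ => hinv (t, t)) (Set.Icc 0 1) :=
  hilbert_curve_monotone_bottom_edge_and_diagonal_general h hmaps hsurj e1 e2 e3 e4
end
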